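/- arXiv:2307.12620 — 5 statements merged into one kernel-verified Lean document; each statement's English description precedes it below -/
import Mathlib

section
/- Let ⟨H,T⟩ be an HT-trace of length λ over alphabet 𝒜, let m be its associated three-valued valuation, let φ be a temporal formula over 𝒜, and let k with 0 ≤ k < λ. Then ⟨H,T⟩,k ⊨ φ if and only if m[k,φ] = 2. -/
/-- Syntax of temporal formulas over an alphabet of atoms `α`:
`⊥`, atoms, `∧`, `∨`, `→`, previous `●`, since `S`, trigger `T`,
next `○`, until `U`, release `R`. -/
inductive TForm (α : Type) : Type
  | bot   : TForm α
  | atom  : α → TForm α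
  | conj  : TForm α → TForm α → TForm α
  | disj  : TForm α → TForm α → TForm α
  | impl  : TForm α → TForm α → TForm α
  | prev  : TForm α → TForm α
  | since : TForm α → TForm α → TForm α
  | trig  : TForm α → TForm α → TForm α
  | next  : TForm α → TForm α
  | untl  : TForm α → TForm α → TForm α
  | rels  : TForm α → TForm α → TForm α

/-- THT_f satisfaction `⟨H,T⟩,k ⊨ φ` for finite traces of length `n`
(time points are `0 ≤ k < n`). -/
def sat {α : Type} (n : ℕ) : (ℕ → Set α) → (ℕ → Set α) → ℕ → TForm α → Prop
  | _, _, _, .bot => False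
  | H, _, k, .atom a => a ∈ H k
  | H, T, k, .conj φ ψ => sat n H T k φ ∧ sat n H T k ψ
  | H, T, k, .disj φ ψ => sat n H T k φ ∨ sat n H T k ψ
  | H, T, k, .impl φ ψ =>
      (sat n H T k φ → sat n H T k ψ) ∧ (sat n T T k φ → sat n T T k ψ)
  | H, T, k, .prev φ => 0 < k ∧ sat n H T (k - 1) φ
  | H, T, k, .since φ ψ =>
      ∃ j, j ≤ k ∧ sat n H T j ψ ∧ ∀ i, j < i → i ≤ k → sat n H T i φ
  | H, T, k, .trig φ ψ =>
      ∀ j, j ≤ k → sat n H T j ψ ∨ ∃ i, j < i ∧ i ≤ k ∧ sat n H T i φ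
  | H, T, k, .next φ => k + 1 < n ∧ sat n H T (k + 1) φ
  | H, T, k, .untl φ ψ =>
      ∃ j, k ≤ j ∧ j < n ∧ sat n H T j ψ ∧ ∀ i, k ≤ i → i < j → sat n H T i φ
  | H, T, k, .rels φ ψ =>
      ∀ j, k ≤ j → j < n → sat n H T j ψ ∨ ∃ i, k ≤ i ∧ i < j ∧ sat n H T i φ

open Classical in
/-- The three-valued valuation `m[k,φ] ∈ {0,1,2}` associated with an HT-trace
`⟨H,T⟩` of length `n` (an empty `Finset.inf` is `⊤ = 2`, an empty `Finset.sup` is `⊥ = 0`). -/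
noncomputable def val {α : Type} (H T : ℕ → Set α) (n : ℕ) : ℕ → TForm α → Fin 3
  | _, .bot => 0
  | k, .atom a => if a ∈ H k then 2 else if a ∈ T k then 1 else 0
  | k, .conj φ ψ => min (val H T n k φ) (val H T n k ψ)
  | k, .disj φ ψ => max (val H T n k φ) (val H T n k ψ)
  | k, .impl φ ψ => if val H T n k φ ≤ val H T n k ψ then 2 else val H T n k ψ
  | k, .prev φ => if k = 0 then 0 else val H T n (k - 1) φ
  | k, .since φ ψ =>
      (Finset.range (k + 1)).sup fun j =>
        min (val H T n j ψ) ((Finset.Ioc j k).inf fun i => val H T n i φ)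
  | k, .trig φ ψ =>
      (Finset.range (k + 1)).inf fun j =>
        max (val H T n j ψ) ((Finset.Ioc j k).sup fun i => val H T n i φ)
  | k, .next φ => if k + 1 = n then 0 else val H T n (k + 1) φ
  | k, .untl φ ψ =>
      (Finset.Ico k n).sup fun j =>
        min (val H T n j ψ) ((Finset.Ico k j).inf fun i => val H T n i φ)
  | k, .rels φ ψ =>
      (Finset.Ico k n).inf fun j =>
        max (val H T n j ψ) ((Finset.Ico k j).sup fun i => val H T n i φ)

private lemma hle2 {x : Fin 3} : 2 ≤ x ↔ x = 2 := by omega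
private lemma hmin2 {x y : Fin 3} : min x y = 2 ↔ x = 2 ∧ y = 2 := by revert x y; decide
private lemma hmax2 {x y : Fin 3} : max x y = 2 ↔ x = 2 ∨ y = 2 := by revert x y; decide
private lemma hmin1 {x y : Fin 3} : 1 ≤ min x y ↔ 1 ≤ x ∧ 1 ≤ y := le_min_iff
private lemma hmax1 {x y : Fin 3} : 1 ≤ max x y ↔ 1 ≤ x ∨ 1 ≤ y := le_max_iff
private lemma hsup2 {s : Finset ℕ} {f : ℕ → Fin 3} : s.sup f = 2 ↔ ∃ j ∈ s, f j = 2 := by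
  rw [← hle2, Finset.le_sup_iff (by decide : (⊥:Fin 3) < 2)]
  simp only [hle2]
private lemma hsup1 {s : Finset ℕ} {f : ℕ → Fin 3} : 1 ≤ s.sup f ↔ ∃ j ∈ s, 1 ≤ f j :=
  Finset.le_sup_iff (by decide)
private lemma hinf2 {s : Finset ℕ} {f : ℕ → Fin 3} : s.inf f = 2 ↔ ∀ j ∈ s, f j = 2 := by
  rw [← hle2, Finset.le_inf_iff]; simp only [hle2]
private lemma hinf1 {s : Finset ℕ} {f : ℕ → Fin 3} : 1 ≤ s.inf f ↔ ∀ j ∈ s, 1 ≤ f j :=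
  Finset.le_inf_iff
private lemma himpl2 {a b : Fin 3} :
    (if a ≤ b then (2:Fin 3) else b) = 2 ↔ ((a = 2 → b = 2) ∧ (1 ≤ a → 1 ≤ b)) := by
  split <;> omega
private lemma himpl1 {a b : Fin 3} : 1 ≤ (if a ≤ b then (2:Fin 3) else b) ↔ (1 ≤ a → 1 ≤ b) := by
  split <;> omega

private lemma main {α : Type} (H T : ℕ → Set α) (n : ℕ) (hHT : ∀ i, i < n → H i ⊆ T i)
    (φ : TForm α) : ∀ k, k < n →
      ((sat n H T k φ ↔ val H T n k φ = 2) ∧ (sat n T T k φ ↔ 1 ≤ val H T n k φ)) := by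
  induction φ with
  | bot =>
      intro k hk
      constructor <;> simp [sat, val] <;> decide
  | atom a =>
      intro k hk
      constructor
      · simp only [sat, val]
        split
        · simp_all
        · split <;> simp_all <;> decide
      · simp only [sat, val]
        split
        · rename_i h; simp only [iff_true_intro (hHT k hk h), true_iff]; decide
        · split
          · rename_i h; simp only [iff_true_intro h, true_iff]; decide
          · rename_i _ h; simp only [iff_false_intro h, false_iff]; decide
  | conj φ ψ ihφ ihψ =>
      intro k hk
      obtain ⟨A1, B1⟩ := ihφ k hk
      obtain ⟨A2, B2⟩ := ihψ k hk
      constructor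
      · simp only [sat, val, hmin2]; exact and_congr A1 A2
      · simp only [sat, val, hmin1]; exact and_congr B1 B2
  | disj φ ψ ihφ ihψ =>
      intro k hk
      obtain ⟨A1, B1⟩ := ihφ k hk
      obtain ⟨A2, B2⟩ := ihψ k hk
      constructor
      · simp only [sat, val, hmax2]; exact or_congr A1 A2
      · simp only [sat, val, hmax1]; exact or_congr B1 B2
  | impl φ ψ ihφ ihψ =>
      intro k hk
      obtain ⟨A1, B1⟩ := ihφ k hk
      obtain ⟨A2, B2⟩ := ihψ k hk
      constructor
      · simp only [sat, val, himpl2]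
        exact and_congr (imp_congr A1 A2) (imp_congr B1 B2)
      · simp only [sat, val, himpl1, and_self]
        exact imp_congr B1 B2
  | prev φ ih =>
      intro k hk
      by_cases h0 : k = 0
      · subst h0
        constructor <;> simp [sat, val] <;> decide
      · have hk1 : k - 1 < n := lt_of_le_of_lt (Nat.sub_le k 1) hk
        obtain ⟨A1, B1⟩ := ih (k - 1) hk1
        constructor
        · simp only [sat, val, if_neg h0, Nat.pos_of_ne_zero h0, true_and]; exact A1
        · simp only [sat, val, if_neg h0, Nat.pos_of_ne_zero h0, true_and]; exact B1
  | since φ ψ ihφ ihψ =>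
      intro k hk
      constructor
      · simp only [sat, val, hsup2, hmin2, hinf2, Finset.mem_range, Nat.lt_succ_iff,
          Finset.mem_Ioc, and_imp]
        exact exists_congr fun j => and_congr_right fun hj =>
          and_congr ((ihψ j (lt_of_le_of_lt hj hk)).1)
            (forall_congr' fun i => imp_congr_right fun _ => imp_congr_right fun hik =>
              (ihφ i (lt_of_le_of_lt hik hk)).1)
      · simp only [sat, val, hsup1, hmin1, hinf1, Finset.mem_range, Nat.lt_succ_iff,
          Finset.mem_Ioc, and_imp]
        exact exists_congr fun j => and_congr_right fun hj =>
          and_congr ((ihψ j (lt_of_le_of_lt hj hk)).2)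
            (forall_congr' fun i => imp_congr_right fun _ => imp_congr_right fun hik =>
              (ihφ i (lt_of_le_of_lt hik hk)).2)
  | trig φ ψ ihφ ihψ =>
      intro k hk
      constructor
      · simp only [sat, val, hinf2, hmax2, hsup2, Finset.mem_range, Nat.lt_succ_iff,
          Finset.mem_Ioc, and_assoc]
        exact forall_congr' fun j => imp_congr_right fun hj =>
          or_congr ((ihψ j (lt_of_le_of_lt hj hk)).1)
            (exists_congr fun i => and_congr_right fun _ => and_congr_right fun hik =>
              (ihφ i (lt_of_le_of_lt hik hk)).1)
      · simp only [sat, val, hinf1, hmax1, hsup1, Finset.mem_range, Nat.lt_succ_iff,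
          Finset.mem_Ioc, and_assoc]
        exact forall_congr' fun j => imp_congr_right fun hj =>
          or_congr ((ihψ j (lt_of_le_of_lt hj hk)).2)
            (exists_congr fun i => and_congr_right fun _ => and_congr_right fun hik =>
              (ihφ i (lt_of_le_of_lt hik hk)).2)
  | next φ ih =>
      intro k hk
      by_cases h : k + 1 = n
      · constructor <;> simp [sat, val, h] <;> decide
      · have hk1 : k + 1 < n := lt_of_le_of_ne hk h
        obtain ⟨A1, B1⟩ := ih (k + 1) hk1
        constructor
        · simp only [sat, val, if_neg h, hk1, true_and]; exact A1
        · simp only [sat, val, if_neg h, hk1, true_and]; exact B1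
  | untl φ ψ ihφ ihψ =>
      intro k hk
      constructor
      · simp only [sat, val, hsup2, hmin2, hinf2, Finset.mem_Ico, and_imp, and_assoc]
        exact exists_congr fun j => and_congr_right fun _ => and_congr_right fun hj =>
          and_congr ((ihψ j hj).1)
            (forall_congr' fun i => imp_congr_right fun _ => imp_congr_right fun hij =>
              (ihφ i (lt_trans hij hj)).1)
      · simp only [sat, val, hsup1, hmin1, hinf1, Finset.mem_Ico, and_imp, and_assoc]
        exact exists_congr fun j => and_congr_right fun _ => and_congr_right fun hj =>
          and_congr ((ihψ j hj).2)
            (forall_congr' fun i => imp_congr_right fun _ => imp_congr_right fun hij =>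
              (ihφ i (lt_trans hij hj)).2)
  | rels φ ψ ihφ ihψ =>
      intro k hk
      constructor
      · simp only [sat, val, hinf2, hmax2, hsup2, Finset.mem_Ico, and_imp, and_assoc]
        exact forall_congr' fun j => imp_congr_right fun _ => imp_congr_right fun hj =>
          or_congr ((ihψ j hj).1)
            (exists_congr fun i => and_congr_right fun _ => and_congr_right fun hij =>
              (ihφ i (lt_trans hij hj)).1)
      · simp only [sat, val, hinf1, hmax1, hsup1, Finset.mem_Ico, and_imp, and_assoc]
        exact forall_congr' fun j => imp_congr_right fun _ => imp_congr_right fun hj =>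
          or_congr ((ihψ j hj).2)
            (exists_congr fun i => and_congr_right fun _ => and_congr_right fun hij =>
              (ihφ i (lt_trans hij hj)).2)
/-- For an HT-trace `⟨H,T⟩` of length `n` with associated
three-valued valuation `val H T n`, any temporal formula `φ` and any `k < n`:
`⟨H,T⟩,k ⊨ φ` iff `m[k,φ] = 2`. -/
theorem sat_iff_val_eq_two {α : Type} (H T : ℕ → Set α) (n : ℕ)
    (hlen : 0 < n) (hHT : ∀ i, i < n → H i ⊆ T i)
    (φ : TForm α) (k : ℕ) (hk : k < n) :
    sat n H T k φ ↔ val H T n k φ = 2 := by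
  exact (main H T n hHT φ k hk).1
end

section
/- Let ⟨H,T⟩ be an HT-trace of length λ over alphabet 𝒜, let m be its associated three-valued valuation, let φ be a temporal formula over 𝒜, and let k with 0 ≤ k < λ. Then ⟨T,T⟩,k ⊨ φ if and only if m[k,φ] ≠ 0. -/
/-- For an HT-trace `⟨H,T⟩` of length `n` with associated
three-valued valuation `val H T n`, any temporal formula `φ` and any `k < n`:
`⟨T,T⟩,k ⊨ φ` iff `m[k,φ] ≠ 0`. -/
theorem satTotal_iff_val_ne_zero {α : Type} (H T : ℕ → Set α) (n : ℕ)
    (hlen : 0 < n) (hHT : ∀ i, i < n → H i ⊆ T i)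
    (φ : TForm α) (k : ℕ) (hk : k < n) :
    sat n T T k φ ↔ val H T n k φ ≠ 0 := by

  rw [← Fin.pos_iff_ne_zero]
  induction φ generalizing k hk with
  | bot => simp [sat, val]
  | atom a =>
    simp only [sat, val]
    split_ifs with h1 h2
    · simpa using hHT k hk h1
    · simpa using h2
    · simpa using h2
  | conj φ ψ ihφ ihψ =>
    simp only [sat, val, lt_min_iff, ihφ k hk, ihψ k hk]
  | disj φ ψ ihφ ihψ =>
    simp only [sat, val, lt_max_iff, ihφ k hk, ihψ k hk]
  | impl φ ψ ihφ ihψ =>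
    simp only [sat, val, and_self, ihφ k hk, ihψ k hk]
    split_ifs with h
    · simp only [show (0:Fin 3) < 2 from by decide, iff_true]
      exact fun hp => lt_of_lt_of_le hp h
    · push_neg at h
      exact ⟨fun hi => hi (lt_of_le_of_lt (Fin.zero_le _) h), fun h0 _ => h0⟩
  | prev φ ih =>
    simp only [sat, val]
    split_ifs with h
    · simp [h]
    · have hk1 : k - 1 < n := by omega
      simp [Nat.pos_of_ne_zero h, ih (k-1) hk1]
  | since φ ψ ihφ ihψ =>
    simp only [sat, val, Finset.lt_sup_iff, Finset.mem_range, Nat.lt_succ_iff,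
      lt_min_iff, Finset.lt_inf_iff (show (0:Fin 3) < ⊤ from by decide),
      Finset.mem_Ioc]
    constructor
    · rintro ⟨j, hj, hψ, hφ⟩
      exact ⟨j, hj, (ihψ j (lt_of_le_of_lt hj hk)).mp hψ,
        fun i hi => (ihφ i (lt_of_le_of_lt hi.2 hk)).mp (hφ i hi.1 hi.2)⟩
    · rintro ⟨j, hj, hψ, hφ⟩
      exact ⟨j, hj, (ihψ j (lt_of_le_of_lt hj hk)).mpr hψ,
        fun i h1 h2 => (ihφ i (lt_of_le_of_lt h2 hk)).mpr (hφ i ⟨h1, h2⟩)⟩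
  | trig φ ψ ihφ ihψ =>
    simp only [sat, val, Finset.lt_inf_iff (show (0:Fin 3) < ⊤ from by decide),
      Finset.mem_range, Nat.lt_succ_iff, lt_max_iff, Finset.lt_sup_iff,
      Finset.mem_Ioc]
    constructor
    · intro h j hj
      rcases h j hj with hψ | ⟨i, h1, h2, hφ⟩
      · exact Or.inl ((ihψ j (lt_of_le_of_lt hj hk)).mp hψ)
      · exact Or.inr ⟨i, ⟨h1, h2⟩, (ihφ i (lt_of_le_of_lt h2 hk)).mp hφ⟩
    · intro h j hj
      rcases h j hj with hψ | ⟨i, ⟨h1, h2⟩, hφ⟩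
      · exact Or.inl ((ihψ j (lt_of_le_of_lt hj hk)).mpr hψ)
      · exact Or.inr ⟨i, h1, h2, (ihφ i (lt_of_le_of_lt h2 hk)).mpr hφ⟩
  | next φ ih =>
    simp only [sat, val]
    split_ifs with h
    · simp [h]
    · have hk1 : k + 1 < n := lt_of_le_of_ne hk h
      simp [hk1, ih (k+1) hk1]
  | untl φ ψ ihφ ihψ =>
    simp only [sat, val, Finset.lt_sup_iff, Finset.mem_Ico,
      lt_min_iff, Finset.lt_inf_iff (show (0:Fin 3) < ⊤ from by decide)]
    constructor
    · rintro ⟨j, hj1, hj2, hψ, hφ⟩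
      exact ⟨j, ⟨hj1, hj2⟩, (ihψ j hj2).mp hψ,
        fun i hi => (ihφ i (lt_trans hi.2 hj2)).mp (hφ i hi.1 hi.2)⟩
    · rintro ⟨j, ⟨hj1, hj2⟩, hψ, hφ⟩
      exact ⟨j, hj1, hj2, (ihψ j hj2).mpr hψ,
        fun i h1 h2 => (ihφ i (lt_trans h2 hj2)).mpr (hφ i ⟨h1, h2⟩)⟩
  | rels φ ψ ihφ ihψ =>
    simp only [sat, val, Finset.lt_inf_iff (show (0:Fin 3) < ⊤ from by decide),
      Finset.mem_Ico, lt_max_iff, Finset.lt_sup_iff]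
    constructor
    · intro h j hj
      rcases h j hj.1 hj.2 with hψ | ⟨i, h1, h2, hφ⟩
      · exact Or.inl ((ihψ j hj.2).mp hψ)
      · exact Or.inr ⟨i, ⟨h1, h2⟩, (ihφ i (lt_trans h2 hj.2)).mp hφ⟩
    · intro h j hj1 hj2
      rcases h j ⟨hj1, hj2⟩ with hψ | ⟨i, ⟨h1, h2⟩, hφ⟩
      · exact Or.inl ((ihψ j hj2).mpr hψ)
      · exact Or.inr ⟨i, h1, h2, (ihφ i (lt_trans h2 hj2)).mpr hφ⟩
end

section
/- Let ⟨H,T⟩ be an HT-trace of length λ with associated three-valued valuation m, and let φ, ψ be temporal formulas. Then for every k with 0 ≤ k < λ: m[k, φTψ] = min( m[k,ψ], max( m[k,φ], p ) ), where p = 2 if k = 0 and p = m[k−1, φTψ] if k > 0. In particular m[0, φTψ] = m[0,ψ]. -/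
/-! The trigger value is a lattice expression in the valuations of its arguments alone. Over any
bounded distributive lattice, splitting off the last index `k + 1` (whose own interval `Ioc` is
empty) and pulling the new term `f (k + 1)` out of every remaining `sup` by distributivity gives
the one-step unfolding. -/

section Trigger

variable {L : Type*} [DistribLattice L] [BoundedOrder L]

def trigger (f g : ℕ → L) (k : ℕ) : L :=
  (Finset.range (k + 1)).inf fun j => g j ⊔ (Finset.Ioc j k).sup f

@[simp]
theorem trigger_zero (f g : ℕ → L) : trigger f g 0 = g 0 := by
  simp [trigger]

theorem trigger_succ (f g : ℕ → L) (k : ℕ) :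
    trigger f g (k + 1) = g (k + 1) ⊓ (f (k + 1) ⊔ trigger f g k) := by
  have hsplit : ∀ j ∈ Finset.range (k + 1),
      g j ⊔ (Finset.Ioc j (k + 1)).sup f = f (k + 1) ⊔ (g j ⊔ (Finset.Ioc j k).sup f) := by
    intro j hj
    rw [← Finset.insert_Ioc_right_eq_Ioc_add_one (Nat.lt_succ_iff.mp (Finset.mem_range.mp hj)),
      Finset.sup_insert, sup_left_comm]
  rw [trigger, Finset.range_add_one, Finset.inf_insert, Finset.Ioc_self, Finset.sup_empty,
    sup_bot_eq, Finset.inf_congr rfl hsplit, ← Finset.inf_sup_distrib_left, trigger]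

end Trigger

theorem val_trig {α : Type} (H T : ℕ → Set α) (n k : ℕ) (φ ψ : TForm α) :
    val H T n k (.trig φ ψ) = trigger (val H T n · φ) (val H T n · ψ) k := by
  rw [val, trigger]

theorem val_trigger_unfold_general {α : Type} (H T : ℕ → Set α) (n : ℕ)
    (φ ψ : TForm α) :
    (∀ k, k < n →
      val H T n k (.trig φ ψ) =
        min (val H T n k ψ)
          (max (val H T n k φ)
            (if k = 0 then 2 else val H T n (k - 1) (.trig φ ψ)))) ∧
    val H T n 0 (.trig φ ψ) = val H T n 0 ψ := by
  refine ⟨fun k _ => ?_, by simp [val_trig]⟩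
  cases k with
  | zero => simpa [val_trig] using Or.inr (Fin.le_last (val H T n 0 ψ))
  | succ k => simpa [val_trig] using trigger_succ (val H T n · φ) (val H T n · ψ) k

/-- one-step unfolding of `trigger` for the three-valued valuation:
`m[k, φTψ] = min(m[k,ψ], max(m[k,φ], p))` where `p = 2` if `k = 0` and
`p = m[k-1, φTψ]` if `k > 0`; in particular `m[0, φTψ] = m[0,ψ]`. -/
theorem val_trigger_unfold {α : Type} (H T : ℕ → Set α) (n : ℕ)
    (hlen : 0 < n) (hHT : ∀ i, i < n → H i ⊆ T i)
    (φ ψ : TForm α) :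
    (∀ k, k < n →
      val H T n k (.trig φ ψ) =
        min (val H T n k ψ)
          (max (val H T n k φ)
            (if k = 0 then 2 else val H T n (k - 1) (.trig φ ψ)))) ∧
    val H T n 0 (.trig φ ψ) = val H T n 0 ψ :=
  val_trigger_unfold_general H T n φ ψ
end

section
/- Let Γ be a temporal theory over alphabet 𝒜 and let ⟨H,T⟩ be a THT_f model of σ(Γ) of length λ, with associated three-valued valuation m. Then for every subformula μ ∈ subf(Γ) and every k with 0 ≤ k < λ, we have m[k, L_μ] = m[k, μ]. -/
/-- Renaming of atoms in a formula. -/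
def TForm.map {α β : Type} (f : α → β) : TForm α → TForm β
  | .bot => .bot
  | .atom a => .atom (f a)
  | .conj φ ψ => .conj (φ.map f) (ψ.map f)
  | .disj φ ψ => .disj (φ.map f) (ψ.map f)
  | .impl φ ψ => .impl (φ.map f) (ψ.map f)
  | .prev φ => .prev (φ.map f)
  | .since φ ψ => .since (φ.map f) (ψ.map f)
  | .trig φ ψ => .trig (φ.map f) (ψ.map f)
  | .next φ => .next (φ.map f)
  | .untl φ ψ => .untl (φ.map f) (ψ.map f)
  | .rels φ ψ => .rels (φ.map f) (ψ.map f)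

/-- The set of subformulas of a formula (including the formula itself). -/
def subf {α : Type} : TForm α → Set (TForm α)
  | .bot => {.bot}
  | .atom a => {.atom a}
  | .conj φ ψ => insert (.conj φ ψ) (subf φ ∪ subf ψ)
  | .disj φ ψ => insert (.disj φ ψ) (subf φ ∪ subf ψ)
  | .impl φ ψ => insert (.impl φ ψ) (subf φ ∪ subf ψ)
  | .prev φ => insert (.prev φ) (subf φ)
  | .since φ ψ => insert (.since φ ψ) (subf φ ∪ subf ψ)
  | .trig φ ψ => insert (.trig φ ψ) (subf φ ∪ subf ψ)
  | .next φ => insert (.next φ) (subf φ)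
  | .untl φ ψ => insert (.untl φ ψ) (subf φ ∪ subf ψ)
  | .rels φ ψ => insert (.rels φ ψ) (subf φ ∪ subf ψ)

/-- The set of subformulas of the formulas of a theory `Γ`. -/
def subfTh {α : Type} (Γ : Set (TForm α)) : Set (TForm α) := ⋃ φ ∈ Γ, subf φ

/-- The extended alphabet `𝒜⁺`: original atoms (`Sum.inl`) plus a fresh
labelling atom `L_μ` (`Sum.inr μ`) for every formula `μ` over `𝒜`. -/
abbrev ExtAlph (α : Type) := α ⊕ TForm α

/-- The label `L_μ` of a formula `μ`, as a formula over the extended alphabet: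
`L_⊥ = ⊥`, `L_a = a` for atoms `a`, and a fresh atom `Sum.inr μ` otherwise. -/
def lab {α : Type} : TForm α → TForm (ExtAlph α)
  | .bot => .bot
  | .atom a => .atom (Sum.inl a)
  | μ => .atom (Sum.inr μ)

/-- Negation `¬φ := φ → ⊥`. -/
def tneg {β : Type} (φ : TForm β) : TForm β := .impl φ .bot

/-- Truth `⊤ := ¬⊥`. -/
def ttop {β : Type} : TForm β := tneg .bot

/-- Double implication `φ ↔ ψ`. -/
def tiff {β : Type} (φ ψ : TForm β) : TForm β := .conj (.impl φ ψ) (.impl ψ φ)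

/-- Always `□φ := ⊥ R φ`. -/
def talways {β : Type} (φ : TForm β) : TForm β := .rels .bot φ

/-- Weak next `○̂φ := ¬○⊤ ∨ ○φ`. -/
def twnext {β : Type} (φ : TForm β) : TForm β := .disj (tneg (.next ttop)) (.next φ)

/-- The definition `η(μ)` of the label `L_μ` of a formula `μ`. -/
def eta {α : Type} : TForm α → Set (TForm (ExtAlph α))
  | .bot => ∅
  | .atom _ => ∅
  | .conj φ ψ =>
      {talways (tiff (lab (.conj φ ψ)) (.conj (lab φ) (lab ψ)))}
  | .disj φ ψ =>
      {talways (tiff (lab (.disj φ ψ)) (.disj (lab φ) (lab ψ)))}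
  | .impl φ ψ =>
      {talways (tiff (lab (.impl φ ψ)) (.impl (lab φ) (lab ψ)))}
  | .prev φ =>
      {twnext (talways (tiff (lab (.prev φ)) (.prev (lab φ)))),
       tneg (lab (.prev φ))}
  | .since φ ψ =>
      {twnext (talways (tiff (lab (.since φ ψ))
          (.disj (lab ψ) (.conj (lab φ) (.prev (lab (.since φ ψ))))))),
       tiff (lab (.since φ ψ)) (lab ψ)}
  | .trig φ ψ =>
      {twnext (talways (tiff (lab (.trig φ ψ))
          (.conj (lab ψ) (.disj (lab φ) (.prev (lab (.trig φ ψ))))))),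
       tiff (lab (.trig φ ψ)) (lab ψ)}
  | .next φ =>
      {twnext (talways (tiff (.prev (lab (.next φ))) (lab φ))),
       talways (.impl (tneg (.next ttop)) (tneg (lab (.next φ))))}
  | .untl φ ψ =>
      {twnext (talways (tiff (.prev (lab (.untl φ ψ)))
          (.disj (.prev (lab ψ)) (.conj (.prev (lab φ)) (lab (.untl φ ψ)))))),
       talways (.impl (tneg (.next ttop)) (tiff (lab (.untl φ ψ)) (lab ψ)))}
  | .rels φ ψ =>
      {twnext (talways (tiff (.prev (lab (.rels φ ψ)))
          (.conj (.prev (lab ψ)) (.disj (.prev (lab φ)) (lab (.rels φ ψ)))))),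
       talways (.impl (tneg (.next ttop)) (tiff (lab (.rels φ ψ)) (lab ψ)))}

/-- The translation `σ(Γ) = {L_φ | φ ∈ Γ} ∪ ⋃ {η(μ) | μ ∈ subf(Γ)}`. -/
def sigmaT {α : Type} (Γ : Set (TForm α)) : Set (TForm (ExtAlph α)) :=
  (lab '' Γ) ∪ ⋃ μ ∈ subfTh Γ, eta μ

/-- Restriction of a trace over the extended alphabet to the original alphabet `𝒜`. -/
def restrict {α : Type} (X : ℕ → Set (ExtAlph α)) : ℕ → Set α :=
  fun k => {a | Sum.inl a ∈ X k}

namespace NF2Aux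

lemma fin_eq_two_iff (a : Fin 3) : a = 2 ↔ 2 ≤ a := by revert a; decide

lemma val_eq_of_iff : ∀ a b : Fin 3, (a = 2 ↔ b = 2) → ((1 : Fin 3) ≤ a ↔ 1 ≤ b) → a = b := by
  decide

lemma fin_eq_zero : ∀ a : Fin 3, ¬ (1 : Fin 3) ≤ a → a = 0 := by decide

lemma helper1 {c : Fin 3} (hc : (⊥ : Fin 3) < c) (k : ℕ) (f g : ℕ → Fin 3) (P Q : ℕ → Prop)
    (hf : ∀ j, j ≤ k → (c ≤ f j ↔ P j)) (hg : ∀ j, j ≤ k → (c ≤ g j ↔ Q j)) :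
    (c ≤ (Finset.range (k + 1)).sup fun j => min (f j) ((Finset.Ioc j k).inf g)) ↔
      ∃ j, j ≤ k ∧ P j ∧ ∀ i, j < i → i ≤ k → Q i := by
  rw [Finset.le_sup_iff hc]
  constructor
  · rintro ⟨j, hj, hmin⟩
    rw [Finset.mem_range] at hj
    rw [le_min_iff, Finset.le_inf_iff] at hmin
    exact ⟨j, by omega, (hf j (by omega)).mp hmin.1,
      fun i h1 h2 => (hg i h2).mp (hmin.2 i (Finset.mem_Ioc.mpr ⟨h1, h2⟩))⟩
  · rintro ⟨j, hj, hP, hQ⟩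
    refine ⟨j, Finset.mem_range.mpr (by omega), ?_⟩
    rw [le_min_iff, Finset.le_inf_iff]
    refine ⟨(hf j hj).mpr hP, fun i hi => ?_⟩
    rw [Finset.mem_Ioc] at hi
    exact (hg i hi.2).mpr (hQ i hi.1 hi.2)

lemma helper2 {c : Fin 3} (hc : (⊥ : Fin 3) < c) (k : ℕ) (f g : ℕ → Fin 3) (P Q : ℕ → Prop)
    (hf : ∀ j, j ≤ k → (c ≤ f j ↔ P j)) (hg : ∀ j, j ≤ k → (c ≤ g j ↔ Q j)) :
    (c ≤ (Finset.range (k + 1)).inf fun j => max (f j) ((Finset.Ioc j k).sup g)) ↔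
      ∀ j, j ≤ k → P j ∨ ∃ i, j < i ∧ i ≤ k ∧ Q i := by
  rw [Finset.le_inf_iff]
  constructor
  · intro h j hj
    have h' := h j (Finset.mem_range.mpr (by omega))
    rw [le_max_iff] at h'
    rcases h' with h' | h'
    · exact Or.inl ((hf j hj).mp h')
    · rw [Finset.le_sup_iff hc] at h'
      obtain ⟨i, hi, hci⟩ := h'
      rw [Finset.mem_Ioc] at hi
      exact Or.inr ⟨i, hi.1, hi.2, (hg i hi.2).mp hci⟩
  · intro h j hj
    rw [Finset.mem_range] at hj
    rw [le_max_iff]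
    rcases h j (by omega) with h' | ⟨i, h1, h2, hQ⟩
    · exact Or.inl ((hf j (by omega)).mpr h')
    · exact Or.inr ((Finset.le_sup_iff hc).mpr ⟨i, Finset.mem_Ioc.mpr ⟨h1, h2⟩, (hg i h2).mpr hQ⟩)

lemma helper3 {c : Fin 3} (hc : (⊥ : Fin 3) < c) (k n : ℕ) (f g : ℕ → Fin 3) (P Q : ℕ → Prop)
    (hf : ∀ j, k ≤ j → j < n → (c ≤ f j ↔ P j)) (hg : ∀ j, k ≤ j → j < n → (c ≤ g j ↔ Q j)) :
    (c ≤ (Finset.Ico k n).sup fun j => min (f j) ((Finset.Ico k j).inf g)) ↔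
      ∃ j, k ≤ j ∧ j < n ∧ P j ∧ ∀ i, k ≤ i → i < j → Q i := by
  rw [Finset.le_sup_iff hc]
  constructor
  · rintro ⟨j, hj, hmin⟩
    rw [Finset.mem_Ico] at hj
    rw [le_min_iff, Finset.le_inf_iff] at hmin
    refine ⟨j, hj.1, hj.2, (hf j hj.1 hj.2).mp hmin.1, fun i h1 h2 => ?_⟩
    exact (hg i h1 (by omega)).mp (hmin.2 i (Finset.mem_Ico.mpr ⟨h1, h2⟩))
  · rintro ⟨j, hj1, hj2, hP, hQ⟩
    refine ⟨j, Finset.mem_Ico.mpr ⟨hj1, hj2⟩, ?_⟩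
    rw [le_min_iff, Finset.le_inf_iff]
    refine ⟨(hf j hj1 hj2).mpr hP, fun i hi => ?_⟩
    rw [Finset.mem_Ico] at hi
    exact (hg i hi.1 (by omega)).mpr (hQ i hi.1 hi.2)

lemma helper4 {c : Fin 3} (hc : (⊥ : Fin 3) < c) (k n : ℕ) (f g : ℕ → Fin 3) (P Q : ℕ → Prop)
    (hf : ∀ j, k ≤ j → j < n → (c ≤ f j ↔ P j)) (hg : ∀ j, k ≤ j → j < n → (c ≤ g j ↔ Q j)) :
    (c ≤ (Finset.Ico k n).inf fun j => max (f j) ((Finset.Ico k j).sup g)) ↔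
      ∀ j, k ≤ j → j < n → P j ∨ ∃ i, k ≤ i ∧ i < j ∧ Q i := by
  rw [Finset.le_inf_iff]
  constructor
  · intro h j hj1 hj2
    have h' := h j (Finset.mem_Ico.mpr ⟨hj1, hj2⟩)
    rw [le_max_iff] at h'
    rcases h' with h' | h'
    · exact Or.inl ((hf j hj1 hj2).mp h')
    · rw [Finset.le_sup_iff hc] at h'
      obtain ⟨i, hi, hci⟩ := h'
      rw [Finset.mem_Ico] at hi
      exact Or.inr ⟨i, hi.1, hi.2, (hg i hi.1 (by omega)).mp hci⟩
  · intro h j hj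
    rw [Finset.mem_Ico] at hj
    rw [le_max_iff]
    rcases h j hj.1 hj.2 with h' | ⟨i, h1, h2, hQ⟩
    · exact Or.inl ((hf j hj.1 hj.2).mpr h')
    · exact Or.inr ((Finset.le_sup_iff hc).mpr
        ⟨i, Finset.mem_Ico.mpr ⟨h1, h2⟩, (hg i h1 (by omega)).mpr hQ⟩)

theorem core {α : Type} (H T : ℕ → Set α) (n : ℕ) (hHT : ∀ i, i < n → H i ⊆ T i) :
    ∀ (φ : TForm α) (k : ℕ), k < n →
      ((val H T n k φ = 2 ↔ sat n H T k φ) ∧ ((1 : Fin 3) ≤ val H T n k φ ↔ sat n T T k φ)) := by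
  intro φ
  induction φ with
  | bot =>
    intro k hk
    simp only [val, sat]
    exact ⟨by decide, by decide⟩
  | atom a =>
    intro k hk
    simp only [val, sat]
    constructor
    · constructor
      · intro h
        by_contra hmem
        rw [if_neg hmem] at h
        split_ifs at h <;> exact absurd h (by decide)
      · intro h; rw [if_pos h]
    · constructor
      · intro h
        by_contra hmem
        rw [if_neg (fun hH => hmem (hHT k hk hH)), if_neg hmem] at h
        exact absurd h (by decide)
      · intro h
        by_cases hH : a ∈ H k
        · rw [if_pos hH]; decide
        · rw [if_neg hH, if_pos h]
  | conj φ ψ ihφ ihψ =>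
    intro k hk
    obtain ⟨p2, p1⟩ := ihφ k hk
    obtain ⟨q2, q1⟩ := ihψ k hk
    simp only [val, sat]
    rw [← p2, ← q2, ← p1, ← q1]
    generalize val H T n k φ = a
    generalize val H T n k ψ = b
    revert a b
    decide
  | disj φ ψ ihφ ihψ =>
    intro k hk
    obtain ⟨p2, p1⟩ := ihφ k hk
    obtain ⟨q2, q1⟩ := ihψ k hk
    simp only [val, sat]
    rw [← p2, ← q2, ← p1, ← q1]
    generalize val H T n k φ = a
    generalize val H T n k ψ = b
    revert a b
    decide
  | impl φ ψ ihφ ihψ =>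
    intro k hk
    obtain ⟨p2, p1⟩ := ihφ k hk
    obtain ⟨q2, q1⟩ := ihψ k hk
    simp only [val, sat]
    rw [← p2, ← q2, ← p1, ← q1]
    generalize val H T n k φ = a
    generalize val H T n k ψ = b
    revert a b
    decide
  | prev φ ihφ =>
    intro k hk
    simp only [val, sat]
    by_cases h0 : k = 0
    · subst h0
      rw [if_pos rfl]
      exact ⟨⟨fun h => absurd h (by decide), fun h => absurd h.1 (by omega)⟩,
        ⟨fun h => absurd h (by decide), fun h => absurd h.1 (by omega)⟩⟩
    · obtain ⟨p2, p1⟩ := ihφ (k - 1) (by omega)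
      rw [if_neg h0, p2, p1]
      have hp : 0 < k := by omega
      simp [hp]
  | since φ ψ ihφ ihψ =>
    intro k hk
    simp only [val, sat]
    constructor
    · rw [fin_eq_two_iff]
      exact helper1 (by decide) k _ _ _ _
        (fun j hj => (fin_eq_two_iff _).symm.trans (ihψ j (by omega)).1)
        (fun j hj => (fin_eq_two_iff _).symm.trans (ihφ j (by omega)).1)
    · exact helper1 (by decide) k _ _ _ _
        (fun j hj => (ihψ j (by omega)).2)
        (fun j hj => (ihφ j (by omega)).2)
  | trig φ ψ ihφ ihψ =>
    intro k hk
    simp only [val, sat]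
    constructor
    · rw [fin_eq_two_iff]
      exact helper2 (by decide) k _ _ _ _
        (fun j hj => (fin_eq_two_iff _).symm.trans (ihψ j (by omega)).1)
        (fun j hj => (fin_eq_two_iff _).symm.trans (ihφ j (by omega)).1)
    · exact helper2 (by decide) k _ _ _ _
        (fun j hj => (ihψ j (by omega)).2)
        (fun j hj => (ihφ j (by omega)).2)
  | next φ ihφ =>
    intro k hk
    simp only [val, sat]
    by_cases h0 : k + 1 = n
    · rw [if_pos h0]
      exact ⟨⟨fun h => absurd h (by decide), fun h => absurd h.1 (by omega)⟩,
        ⟨fun h => absurd h (by decide), fun h => absurd h.1 (by omega)⟩⟩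
    · obtain ⟨p2, p1⟩ := ihφ (k + 1) (by omega)
      rw [if_neg h0, p2, p1]
      have hp : k + 1 < n := by omega
      simp [hp]
  | untl φ ψ ihφ ihψ =>
    intro k hk
    simp only [val, sat]
    constructor
    · rw [fin_eq_two_iff]
      exact helper3 (by decide) k n _ _ _ _
        (fun j hj1 hj2 => (fin_eq_two_iff _).symm.trans (ihψ j hj2).1)
        (fun j hj1 hj2 => (fin_eq_two_iff _).symm.trans (ihφ j hj2).1)
    · exact helper3 (by decide) k n _ _ _ _
        (fun j hj1 hj2 => (ihψ j hj2).2)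
        (fun j hj1 hj2 => (ihφ j hj2).2)
  | rels φ ψ ihφ ihψ =>
    intro k hk
    simp only [val, sat]
    constructor
    · rw [fin_eq_two_iff]
      exact helper4 (by decide) k n _ _ _ _
        (fun j hj1 hj2 => (fin_eq_two_iff _).symm.trans (ihψ j hj2).1)
        (fun j hj1 hj2 => (fin_eq_two_iff _).symm.trans (ihφ j hj2).1)
    · exact helper4 (by decide) k n _ _ _ _
        (fun j hj1 hj2 => (ihψ j hj2).2)
        (fun j hj1 hj2 => (ihφ j hj2).2)

end NF2Aux
namespace NF2Aux

variable {α : Type}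

lemma val_conj (H T : ℕ → Set α) (n k : ℕ) (φ ψ : TForm α) :
    val H T n k (.conj φ ψ) = min (val H T n k φ) (val H T n k ψ) := by simp only [val]

lemma val_disj (H T : ℕ → Set α) (n k : ℕ) (φ ψ : TForm α) :
    val H T n k (.disj φ ψ) = max (val H T n k φ) (val H T n k ψ) := by simp only [val]

lemma val_impl (H T : ℕ → Set α) (n k : ℕ) (φ ψ : TForm α) :
    val H T n k (.impl φ ψ) =
      if val H T n k φ ≤ val H T n k ψ then 2 else val H T n k ψ := by simp only [val]

lemma val_next (H T : ℕ → Set α) (n k : ℕ) (φ : TForm α) :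
    val H T n k (.next φ) = if k + 1 = n then 0 else val H T n (k + 1) φ := by
  simp only [val]

lemma val_prev_zero (H T : ℕ → Set α) (n : ℕ) (φ : TForm α) :
    val H T n 0 (.prev φ) = 0 := by simp [val]

lemma val_prev_succ (H T : ℕ → Set α) (n k : ℕ) (φ : TForm α) :
    val H T n (k + 1) (.prev φ) = val H T n k φ := by
  simp only [val]
  rw [if_neg (Nat.succ_ne_zero k), Nat.add_sub_cancel]

lemma val_since_zero (H T : ℕ → Set α) (n : ℕ) (φ ψ : TForm α) :
    val H T n 0 (.since φ ψ) = val H T n 0 ψ := by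
  simp only [val]
  simp [Finset.range_one, Finset.Ioc_self]

lemma val_since_succ (H T : ℕ → Set α) (n k : ℕ) (φ ψ : TForm α) :
    val H T n (k + 1) (.since φ ψ) =
      max (val H T n (k + 1) ψ)
        (min (val H T n (k + 1) φ) (val H T n k (.since φ ψ))) := by
  conv_lhs => rw [show val H T n (k + 1) (.since φ ψ) =
    (Finset.range (k + 2)).sup
      (fun j => min (val H T n j ψ) ((Finset.Ioc j (k + 1)).inf fun i => val H T n i φ)) from
    by simp only [val]]
  rw [Finset.range_add_one, Finset.sup_insert]
  have h1 : min (val H T n (k + 1) ψ)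
      ((Finset.Ioc (k + 1) (k + 1)).inf fun i => val H T n i φ) = val H T n (k + 1) ψ := by
    simp [Finset.Ioc_self]
  rw [h1]
  have h2 : ((Finset.range (k + 1)).sup
      fun j => min (val H T n j ψ) ((Finset.Ioc j (k + 1)).inf fun i => val H T n i φ))
      = min (val H T n (k + 1) φ) (val H T n k (.since φ ψ)) := by
    have hcong : ∀ j ∈ Finset.range (k + 1),
        min (val H T n j ψ) ((Finset.Ioc j (k + 1)).inf fun i => val H T n i φ)
          = min (val H T n (k + 1) φ)
              (min (val H T n j ψ) ((Finset.Ioc j k).inf fun i => val H T n i φ)) := by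
      intro j hj
      rw [Finset.mem_range] at hj
      rw [show Finset.Ioc j (k + 1) = insert (k + 1) (Finset.Ioc j k) from by
        ext x; simp only [Finset.mem_Ioc, Finset.mem_insert]; omega]
      rw [Finset.inf_insert]
      rw [show ∀ a b : Fin 3, a ⊓ b = min a b from fun _ _ => rfl]
      exact min_left_comm _ _ _
    rw [Finset.sup_congr rfl hcong]
    rw [show ∀ a b : Fin 3, min a b = a ⊓ b from fun _ _ => rfl]
    rw [← Finset.sup_inf_distrib_left]
    rfl
  rw [h2]

lemma val_trig_zero (H T : ℕ → Set α) (n : ℕ) (φ ψ : TForm α) :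
    val H T n 0 (.trig φ ψ) = val H T n 0 ψ := by
  simp only [val]
  simp [Finset.range_one, Finset.Ioc_self]

lemma val_trig_succ (H T : ℕ → Set α) (n k : ℕ) (φ ψ : TForm α) :
    val H T n (k + 1) (.trig φ ψ) =
      min (val H T n (k + 1) ψ)
        (max (val H T n (k + 1) φ) (val H T n k (.trig φ ψ))) := by
  conv_lhs => rw [show val H T n (k + 1) (.trig φ ψ) =
    (Finset.range (k + 2)).inf
      (fun j => max (val H T n j ψ) ((Finset.Ioc j (k + 1)).sup fun i => val H T n i φ)) from
    by simp only [val]]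
  rw [Finset.range_add_one, Finset.inf_insert]
  have h1 : max (val H T n (k + 1) ψ)
      ((Finset.Ioc (k + 1) (k + 1)).sup fun i => val H T n i φ) = val H T n (k + 1) ψ := by
    simp [Finset.Ioc_self]
  rw [h1]
  have h2 : ((Finset.range (k + 1)).inf
      fun j => max (val H T n j ψ) ((Finset.Ioc j (k + 1)).sup fun i => val H T n i φ))
      = max (val H T n (k + 1) φ) (val H T n k (.trig φ ψ)) := by
    have hcong : ∀ j ∈ Finset.range (k + 1),
        max (val H T n j ψ) ((Finset.Ioc j (k + 1)).sup fun i => val H T n i φ)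
          = max (val H T n (k + 1) φ)
              (max (val H T n j ψ) ((Finset.Ioc j k).sup fun i => val H T n i φ)) := by
      intro j hj
      rw [Finset.mem_range] at hj
      rw [show Finset.Ioc j (k + 1) = insert (k + 1) (Finset.Ioc j k) from by
        ext x; simp only [Finset.mem_Ioc, Finset.mem_insert]; omega]
      rw [Finset.sup_insert]
      rw [show ∀ a b : Fin 3, a ⊔ b = max a b from fun _ _ => rfl]
      exact max_left_comm _ _ _
    rw [Finset.inf_congr rfl hcong]
    rw [show ∀ a b : Fin 3, max a b = a ⊔ b from fun _ _ => rfl]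
    rw [← Finset.inf_sup_distrib_left]
    rfl
  rw [h2]

lemma val_untl_last (H T : ℕ → Set α) (n k : ℕ) (hk : k + 1 = n) (φ ψ : TForm α) :
    val H T n k (.untl φ ψ) = val H T n k ψ := by
  simp only [val]
  rw [show Finset.Ico k n = {k} from by ext x; simp only [Finset.mem_Ico, Finset.mem_singleton]; omega]
  simp [Finset.Ico_self]

lemma val_untl_succ (H T : ℕ → Set α) (n k : ℕ) (hk : k + 1 < n) (φ ψ : TForm α) :
    val H T n k (.untl φ ψ) =
      max (val H T n k ψ)
        (min (val H T n k φ) (val H T n (k + 1) (.untl φ ψ))) := by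
  conv_lhs => rw [show val H T n k (.untl φ ψ) =
    (Finset.Ico k n).sup
      (fun j => min (val H T n j ψ) ((Finset.Ico k j).inf fun i => val H T n i φ)) from
    by simp only [val]]
  rw [show Finset.Ico k n = insert k (Finset.Ico (k + 1) n) from by
    ext x; simp only [Finset.mem_Ico, Finset.mem_insert]; omega]
  rw [Finset.sup_insert]
  have h1 : min (val H T n k ψ) ((Finset.Ico k k).inf fun i => val H T n i φ)
      = val H T n k ψ := by simp [Finset.Ico_self]
  rw [h1]
  have h2 : ((Finset.Ico (k + 1) n).sup
      fun j => min (val H T n j ψ) ((Finset.Ico k j).inf fun i => val H T n i φ))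
      = min (val H T n k φ) (val H T n (k + 1) (.untl φ ψ)) := by
    have hcong : ∀ j ∈ Finset.Ico (k + 1) n,
        min (val H T n j ψ) ((Finset.Ico k j).inf fun i => val H T n i φ)
          = min (val H T n k φ)
              (min (val H T n j ψ) ((Finset.Ico (k + 1) j).inf fun i => val H T n i φ)) := by
      intro j hj
      rw [Finset.mem_Ico] at hj
      rw [show Finset.Ico k j = insert k (Finset.Ico (k + 1) j) from by
        ext x; simp only [Finset.mem_Ico, Finset.mem_insert]; omega]
      rw [Finset.inf_insert]
      rw [show ∀ a b : Fin 3, a ⊓ b = min a b from fun _ _ => rfl]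
      exact min_left_comm _ _ _
    rw [Finset.sup_congr rfl hcong]
    rw [show ∀ a b : Fin 3, min a b = a ⊓ b from fun _ _ => rfl]
    rw [← Finset.sup_inf_distrib_left]
    rfl
  rw [h2]

lemma val_rels_last (H T : ℕ → Set α) (n k : ℕ) (hk : k + 1 = n) (φ ψ : TForm α) :
    val H T n k (.rels φ ψ) = val H T n k ψ := by
  simp only [val]
  rw [show Finset.Ico k n = {k} from by ext x; simp only [Finset.mem_Ico, Finset.mem_singleton]; omega]
  simp [Finset.Ico_self]

lemma val_rels_succ (H T : ℕ → Set α) (n k : ℕ) (hk : k + 1 < n) (φ ψ : TForm α) :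
    val H T n k (.rels φ ψ) =
      min (val H T n k ψ)
        (max (val H T n k φ) (val H T n (k + 1) (.rels φ ψ))) := by
  conv_lhs => rw [show val H T n k (.rels φ ψ) =
    (Finset.Ico k n).inf
      (fun j => max (val H T n j ψ) ((Finset.Ico k j).sup fun i => val H T n i φ)) from
    by simp only [val]]
  rw [show Finset.Ico k n = insert k (Finset.Ico (k + 1) n) from by
    ext x; simp only [Finset.mem_Ico, Finset.mem_insert]; omega]
  rw [Finset.inf_insert]
  have h1 : max (val H T n k ψ) ((Finset.Ico k k).sup fun i => val H T n i φ)
      = val H T n k ψ := by simp [Finset.Ico_self]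
  rw [h1]
  have h2 : ((Finset.Ico (k + 1) n).inf
      fun j => max (val H T n j ψ) ((Finset.Ico k j).sup fun i => val H T n i φ))
      = max (val H T n k φ) (val H T n (k + 1) (.rels φ ψ)) := by
    have hcong : ∀ j ∈ Finset.Ico (k + 1) n,
        max (val H T n j ψ) ((Finset.Ico k j).sup fun i => val H T n i φ)
          = max (val H T n k φ)
              (max (val H T n j ψ) ((Finset.Ico (k + 1) j).sup fun i => val H T n i φ)) := by
      intro j hj
      rw [Finset.mem_Ico] at hj
      rw [show Finset.Ico k j = insert k (Finset.Ico (k + 1) j) from by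
        ext x; simp only [Finset.mem_Ico, Finset.mem_insert]; omega]
      rw [Finset.sup_insert]
      rw [show ∀ a b : Fin 3, a ⊔ b = max a b from fun _ _ => rfl]
      exact max_left_comm _ _ _
    rw [Finset.inf_congr rfl hcong]
    rw [show ∀ a b : Fin 3, max a b = a ⊔ b from fun _ _ => rfl]
    rw [← Finset.inf_sup_distrib_left]
    rfl
  rw [h2]

end NF2Aux
namespace NF2Aux

variable {α : Type}

lemma sat_talways_iff {H T : ℕ → Set α} {n k : ℕ} {φ : TForm α} :
    sat n H T k (talways φ) ↔ ∀ j, k ≤ j → j < n → sat n H T j φ := by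
  simp [talways, sat]

lemma sat_ttop {H T : ℕ → Set α} {n k : ℕ} : sat n H T k (ttop (β := α)) := by
  exact ⟨fun h => h, fun h => h⟩

lemma sat_twnext_talways {H T : ℕ → Set α} {n : ℕ} {φ : TForm α}
    (hn : sat n H T 0 (twnext (talways φ))) :
    ∀ j, 1 ≤ j → j < n → sat n H T j φ := by
  intro j h1 h2
  simp only [twnext, sat] at hn
  rcases hn with h | h
  · exfalso
    exact h.1 ⟨by omega, fun x => x, fun x => x⟩
  · exact sat_talways_iff.mp h.2 j (by omega) h2

lemma sat_lastimpl {H T : ℕ → Set α} {n k : ℕ} {B : TForm α} (hk : k + 1 = n)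
    (h : sat n H T k (.impl (tneg (.next ttop)) B)) :
    sat n H T k B := by
  apply h.1
  exact ⟨fun hc => absurd hc.1 (by omega), fun hc => absurd hc.1 (by omega)⟩

lemma val_of_tiff {H T : ℕ → Set α} {n k : ℕ} (hHT : ∀ i, i < n → H i ⊆ T i)
    (hk : k < n) {φ ψ : TForm α} (h : sat n H T k (tiff φ ψ)) :
    val H T n k φ = val H T n k ψ := by
  obtain ⟨c2φ, c1φ⟩ := core H T n hHT φ k hk
  obtain ⟨c2ψ, c1ψ⟩ := core H T n hHT ψ k hk
  obtain ⟨⟨h1, h2⟩, ⟨h3, h4⟩⟩ := h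
  apply val_eq_of_iff
  · rw [c2φ, c2ψ]; exact ⟨h1, h3⟩
  · rw [c1φ, c1ψ]; exact ⟨h2, h4⟩

lemma val_of_tneg {H T : ℕ → Set α} {n k : ℕ} (hHT : ∀ i, i < n → H i ⊆ T i)
    (hk : k < n) {φ : TForm α} (h : sat n H T k (tneg φ)) :
    val H T n k φ = 0 := by
  obtain ⟨c2, c1⟩ := core H T n hHT φ k hk
  exact fin_eq_zero _ (fun hle => h.2 (c1.mp hle))

lemma mem_subf_self (φ : TForm α) : φ ∈ subf φ := by
  cases φ <;> simp [subf]

lemma subf_trans : ∀ γ μ : TForm α, μ ∈ subf γ → subf μ ⊆ subf γ := by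
  intro γ
  induction γ with
  | bot =>
    intro μ h
    rw [show μ = TForm.bot from h]
  | atom a =>
    intro μ h
    rw [show μ = TForm.atom a from h]
  | conj φ ψ ihφ ihψ =>
    intro μ h
    simp only [subf, Set.mem_insert_iff, Set.mem_union] at h
    rcases h with rfl | h | h
    · exact subset_rfl
    · exact (ihφ μ h).trans fun x hx => by
        simp only [subf, Set.mem_insert_iff, Set.mem_union]; exact Or.inr (Or.inl hx)
    · exact (ihψ μ h).trans fun x hx => by
        simp only [subf, Set.mem_insert_iff, Set.mem_union]; exact Or.inr (Or.inr hx)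
  | disj φ ψ ihφ ihψ =>
    intro μ h
    simp only [subf, Set.mem_insert_iff, Set.mem_union] at h
    rcases h with rfl | h | h
    · exact subset_rfl
    · exact (ihφ μ h).trans fun x hx => by
        simp only [subf, Set.mem_insert_iff, Set.mem_union]; exact Or.inr (Or.inl hx)
    · exact (ihψ μ h).trans fun x hx => by
        simp only [subf, Set.mem_insert_iff, Set.mem_union]; exact Or.inr (Or.inr hx)
  | impl φ ψ ihφ ihψ =>
    intro μ h
    simp only [subf, Set.mem_insert_iff, Set.mem_union] at h
    rcases h with rfl | h | h
    · exact subset_rfl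
    · exact (ihφ μ h).trans fun x hx => by
        simp only [subf, Set.mem_insert_iff, Set.mem_union]; exact Or.inr (Or.inl hx)
    · exact (ihψ μ h).trans fun x hx => by
        simp only [subf, Set.mem_insert_iff, Set.mem_union]; exact Or.inr (Or.inr hx)
  | prev φ ihφ =>
    intro μ h
    simp only [subf, Set.mem_insert_iff] at h
    rcases h with rfl | h
    · exact subset_rfl
    · exact (ihφ μ h).trans fun x hx => by
        simp only [subf, Set.mem_insert_iff]; exact Or.inr hx
  | since φ ψ ihφ ihψ =>
    intro μ h
    simp only [subf, Set.mem_insert_iff, Set.mem_union] at h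
    rcases h with rfl | h | h
    · exact subset_rfl
    · exact (ihφ μ h).trans fun x hx => by
        simp only [subf, Set.mem_insert_iff, Set.mem_union]; exact Or.inr (Or.inl hx)
    · exact (ihψ μ h).trans fun x hx => by
        simp only [subf, Set.mem_insert_iff, Set.mem_union]; exact Or.inr (Or.inr hx)
  | trig φ ψ ihφ ihψ =>
    intro μ h
    simp only [subf, Set.mem_insert_iff, Set.mem_union] at h
    rcases h with rfl | h | h
    · exact subset_rfl
    · exact (ihφ μ h).trans fun x hx => by
        simp only [subf, Set.mem_insert_iff, Set.mem_union]; exact Or.inr (Or.inl hx)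
    · exact (ihψ μ h).trans fun x hx => by
        simp only [subf, Set.mem_insert_iff, Set.mem_union]; exact Or.inr (Or.inr hx)
  | next φ ihφ =>
    intro μ h
    simp only [subf, Set.mem_insert_iff] at h
    rcases h with rfl | h
    · exact subset_rfl
    · exact (ihφ μ h).trans fun x hx => by
        simp only [subf, Set.mem_insert_iff]; exact Or.inr hx
  | untl φ ψ ihφ ihψ =>
    intro μ h
    simp only [subf, Set.mem_insert_iff, Set.mem_union] at h
    rcases h with rfl | h | h
    · exact subset_rfl
    · exact (ihφ μ h).trans fun x hx => by
        simp only [subf, Set.mem_insert_iff, Set.mem_union]; exact Or.inr (Or.inl hx)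
    · exact (ihψ μ h).trans fun x hx => by
        simp only [subf, Set.mem_insert_iff, Set.mem_union]; exact Or.inr (Or.inr hx)
  | rels φ ψ ihφ ihψ =>
    intro μ h
    simp only [subf, Set.mem_insert_iff, Set.mem_union] at h
    rcases h with rfl | h | h
    · exact subset_rfl
    · exact (ihφ μ h).trans fun x hx => by
        simp only [subf, Set.mem_insert_iff, Set.mem_union]; exact Or.inr (Or.inl hx)
    · exact (ihψ μ h).trans fun x hx => by
        simp only [subf, Set.mem_insert_iff, Set.mem_union]; exact Or.inr (Or.inr hx)

lemma subfTh_closed {Γ : Set (TForm α)} {μ ν : TForm α}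
    (hμ : μ ∈ subfTh Γ) (hν : ν ∈ subf μ) : ν ∈ subfTh Γ := by
  simp only [subfTh, Set.mem_iUnion] at hμ ⊢
  obtain ⟨γ, hγ, hm⟩ := hμ
  exact ⟨γ, hγ, subf_trans γ μ hm hν⟩

end NF2Aux
open NF2Aux

/-- Lemma nf2: Let `Γ` be a temporal theory over `α` and let
`⟨H,T⟩` be a THT_f model of `σ(Γ)` of length `n` over the extended alphabet,
with associated valuation `m`.  Then for every subformula `μ ∈ subf(Γ)` and
every `k < n` we have `m[k, L_μ] = m[k, μ]` (where `μ` is read over the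
extended alphabet via the inclusion of `𝒜` into `𝒜⁺`). -/
theorem nf2 {α : Type} (Γ : Set (TForm α)) (H T : ℕ → Set (ExtAlph α)) (n : ℕ)
    (hlen : 0 < n) (hHT : ∀ i, i < n → H i ⊆ T i)
    (hmod : ∀ δ ∈ sigmaT Γ, sat n H T 0 δ) :
    ∀ μ ∈ subfTh Γ, ∀ k, k < n →
      val H T n k (lab μ) = val H T n k (TForm.map Sum.inl μ) := by
  have heta : ∀ μ ∈ subfTh Γ, ∀ δ ∈ eta μ, sat n H T 0 δ := by
    intro μ hμ δ hδ
    exact hmod δ (Set.mem_union_right _ (Set.mem_biUnion hμ hδ))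
  intro μ
  induction μ with
  | bot => intro _ k hk; rfl
  | atom a => intro _ k hk; rfl
  | conj φ ψ ihφ ihψ =>
    intro hμ k hk
    have hφ : φ ∈ subfTh Γ := subfTh_closed hμ (by
      simp only [subf, Set.mem_insert_iff, Set.mem_union]
      exact Or.inr (Or.inl (mem_subf_self _)))
    have hψ : ψ ∈ subfTh Γ := subfTh_closed hμ (by
      simp only [subf, Set.mem_insert_iff, Set.mem_union]
      exact Or.inr (Or.inr (mem_subf_self _)))
    have hc : sat n H T 0 (talways (tiff (lab (.conj φ ψ)) (.conj (lab φ) (lab ψ)))) :=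
      heta _ hμ _ rfl
    have h2 := val_of_tiff hHT hk (sat_talways_iff.mp hc k (by omega) hk)
    rw [h2, val_conj, ihφ hφ k hk, ihψ hψ k hk,
      show TForm.map Sum.inl (TForm.conj φ ψ)
        = TForm.conj (TForm.map Sum.inl φ) (TForm.map Sum.inl ψ) from rfl, val_conj]
  | disj φ ψ ihφ ihψ =>
    intro hμ k hk
    have hφ : φ ∈ subfTh Γ := subfTh_closed hμ (by
      simp only [subf, Set.mem_insert_iff, Set.mem_union]
      exact Or.inr (Or.inl (mem_subf_self _)))
    have hψ : ψ ∈ subfTh Γ := subfTh_closed hμ (by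
      simp only [subf, Set.mem_insert_iff, Set.mem_union]
      exact Or.inr (Or.inr (mem_subf_self _)))
    have hc : sat n H T 0 (talways (tiff (lab (.disj φ ψ)) (.disj (lab φ) (lab ψ)))) :=
      heta _ hμ _ rfl
    have h2 := val_of_tiff hHT hk (sat_talways_iff.mp hc k (by omega) hk)
    rw [h2, val_disj, ihφ hφ k hk, ihψ hψ k hk,
      show TForm.map Sum.inl (TForm.disj φ ψ)
        = TForm.disj (TForm.map Sum.inl φ) (TForm.map Sum.inl ψ) from rfl, val_disj]
  | impl φ ψ ihφ ihψ =>
    intro hμ k hk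
    have hφ : φ ∈ subfTh Γ := subfTh_closed hμ (by
      simp only [subf, Set.mem_insert_iff, Set.mem_union]
      exact Or.inr (Or.inl (mem_subf_self _)))
    have hψ : ψ ∈ subfTh Γ := subfTh_closed hμ (by
      simp only [subf, Set.mem_insert_iff, Set.mem_union]
      exact Or.inr (Or.inr (mem_subf_self _)))
    have hc : sat n H T 0 (talways (tiff (lab (.impl φ ψ)) (.impl (lab φ) (lab ψ)))) :=
      heta _ hμ _ rfl
    have h2 := val_of_tiff hHT hk (sat_talways_iff.mp hc k (by omega) hk)
    rw [h2, val_impl, ihφ hφ k hk, ihψ hψ k hk,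
      show TForm.map Sum.inl (TForm.impl φ ψ)
        = TForm.impl (TForm.map Sum.inl φ) (TForm.map Sum.inl ψ) from rfl, val_impl]
  | prev φ ihφ =>
    intro hμ k hk
    have hφ : φ ∈ subfTh Γ := subfTh_closed hμ (by
      simp only [subf, Set.mem_insert_iff]
      exact Or.inr (mem_subf_self _))
    have hc1 : sat n H T 0 (twnext (talways (tiff (lab (.prev φ)) (.prev (lab φ))))) :=
      heta _ hμ _ (Set.mem_insert _ _)
    have hc2 : sat n H T 0 (tneg (lab (.prev φ))) :=
      heta _ hμ _ (Set.mem_insert_iff.mpr (Or.inr rfl))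
    rw [show TForm.map Sum.inl (TForm.prev φ) = TForm.prev (TForm.map Sum.inl φ) from rfl]
    cases k with
    | zero =>
      rw [val_of_tneg hHT hk hc2, val_prev_zero]
    | succ k =>
      have h2 := val_of_tiff hHT hk (sat_twnext_talways hc1 (k + 1) (by omega) hk)
      rw [h2, val_prev_succ, val_prev_succ, ihφ hφ k (by omega)]
  | since φ ψ ihφ ihψ =>
    intro hμ
    have hφ : φ ∈ subfTh Γ := subfTh_closed hμ (by
      simp only [subf, Set.mem_insert_iff, Set.mem_union]
      exact Or.inr (Or.inl (mem_subf_self _)))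
    have hψ : ψ ∈ subfTh Γ := subfTh_closed hμ (by
      simp only [subf, Set.mem_insert_iff, Set.mem_union]
      exact Or.inr (Or.inr (mem_subf_self _)))
    have hc1 : sat n H T 0 (twnext (talways (tiff (lab (.since φ ψ))
        (.disj (lab ψ) (.conj (lab φ) (.prev (lab (.since φ ψ)))))))) :=
      heta _ hμ _ (Set.mem_insert _ _)
    have hc2 : sat n H T 0 (tiff (lab (.since φ ψ)) (lab ψ)) :=
      heta _ hμ _ (Set.mem_insert_iff.mpr (Or.inr rfl))
    intro k
    induction k with
    | zero =>
      intro hk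
      rw [val_of_tiff hHT hk hc2, ihψ hψ 0 hk,
        show TForm.map Sum.inl (TForm.since φ ψ)
          = TForm.since (TForm.map Sum.inl φ) (TForm.map Sum.inl ψ) from rfl,
        val_since_zero]
    | succ k ihk =>
      intro hk
      have hk' : k < n := by omega
      have h2 := val_of_tiff hHT hk (sat_twnext_talways hc1 (k + 1) (by omega) hk)
      rw [h2, val_disj, val_conj, val_prev_succ, ihk hk', ihφ hφ (k + 1) hk, ihψ hψ (k + 1) hk,
        show TForm.map Sum.inl (TForm.since φ ψ)
          = TForm.since (TForm.map Sum.inl φ) (TForm.map Sum.inl ψ) from rfl,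
        val_since_succ]
  | trig φ ψ ihφ ihψ =>
    intro hμ
    have hφ : φ ∈ subfTh Γ := subfTh_closed hμ (by
      simp only [subf, Set.mem_insert_iff, Set.mem_union]
      exact Or.inr (Or.inl (mem_subf_self _)))
    have hψ : ψ ∈ subfTh Γ := subfTh_closed hμ (by
      simp only [subf, Set.mem_insert_iff, Set.mem_union]
      exact Or.inr (Or.inr (mem_subf_self _)))
    have hc1 : sat n H T 0 (twnext (talways (tiff (lab (.trig φ ψ))
        (.conj (lab ψ) (.disj (lab φ) (.prev (lab (.trig φ ψ)))))))) :=
      heta _ hμ _ (Set.mem_insert _ _)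
    have hc2 : sat n H T 0 (tiff (lab (.trig φ ψ)) (lab ψ)) :=
      heta _ hμ _ (Set.mem_insert_iff.mpr (Or.inr rfl))
    intro k
    induction k with
    | zero =>
      intro hk
      rw [val_of_tiff hHT hk hc2, ihψ hψ 0 hk,
        show TForm.map Sum.inl (TForm.trig φ ψ)
          = TForm.trig (TForm.map Sum.inl φ) (TForm.map Sum.inl ψ) from rfl,
        val_trig_zero]
    | succ k ihk =>
      intro hk
      have hk' : k < n := by omega
      have h2 := val_of_tiff hHT hk (sat_twnext_talways hc1 (k + 1) (by omega) hk)
      rw [h2, val_conj, val_disj, val_prev_succ, ihk hk', ihφ hφ (k + 1) hk, ihψ hψ (k + 1) hk,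
        show TForm.map Sum.inl (TForm.trig φ ψ)
          = TForm.trig (TForm.map Sum.inl φ) (TForm.map Sum.inl ψ) from rfl,
        val_trig_succ]
  | next φ ihφ =>
    intro hμ k hk
    have hφ : φ ∈ subfTh Γ := subfTh_closed hμ (by
      simp only [subf, Set.mem_insert_iff]
      exact Or.inr (mem_subf_self _))
    have hc1 : sat n H T 0 (twnext (talways (tiff (.prev (lab (.next φ))) (lab φ)))) :=
      heta _ hμ _ (Set.mem_insert _ _)
    have hc2 : sat n H T 0 (talways (.impl (tneg (.next ttop)) (tneg (lab (.next φ))))) :=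
      heta _ hμ _ (Set.mem_insert_iff.mpr (Or.inr rfl))
    rw [show TForm.map Sum.inl (TForm.next φ) = TForm.next (TForm.map Sum.inl φ) from rfl]
    by_cases hlast : k + 1 = n
    · have hB := sat_lastimpl hlast (sat_talways_iff.mp hc2 k (by omega) hk)
      rw [val_of_tneg hHT hk hB, val_next, if_pos hlast]
    · have h2 := val_of_tiff hHT (show k + 1 < n by omega)
        (sat_twnext_talways hc1 (k + 1) (by omega) (by omega))
      rw [val_prev_succ] at h2
      rw [h2, ihφ hφ (k + 1) (by omega), val_next, if_neg hlast]
  | untl φ ψ ihφ ihψ =>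
    intro hμ
    have hφ : φ ∈ subfTh Γ := subfTh_closed hμ (by
      simp only [subf, Set.mem_insert_iff, Set.mem_union]
      exact Or.inr (Or.inl (mem_subf_self _)))
    have hψ : ψ ∈ subfTh Γ := subfTh_closed hμ (by
      simp only [subf, Set.mem_insert_iff, Set.mem_union]
      exact Or.inr (Or.inr (mem_subf_self _)))
    have hc1 : sat n H T 0 (twnext (talways (tiff (.prev (lab (.untl φ ψ)))
        (.disj (.prev (lab ψ)) (.conj (.prev (lab φ)) (lab (.untl φ ψ))))))) :=
      heta _ hμ _ (Set.mem_insert _ _)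
    have hc2 : sat n H T 0 (talways (.impl (tneg (.next ttop))
        (tiff (lab (.untl φ ψ)) (lab ψ)))) :=
      heta _ hμ _ (Set.mem_insert_iff.mpr (Or.inr rfl))
    have hlastcase : ∀ k, k + 1 = n →
        val H T n k (lab (.untl φ ψ)) = val H T n k (TForm.map Sum.inl (.untl φ ψ)) := by
      intro k hk1
      have hk : k < n := by omega
      have hB := sat_lastimpl hk1 (sat_talways_iff.mp hc2 k (by omega) hk)
      rw [val_of_tiff hHT hk hB, ihψ hψ k hk,
        show TForm.map Sum.inl (TForm.untl φ ψ)
          = TForm.untl (TForm.map Sum.inl φ) (TForm.map Sum.inl ψ) from rfl,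
        val_untl_last H T n k hk1]
    have main : ∀ d k, k < n → n - 1 - k ≤ d →
        val H T n k (lab (.untl φ ψ)) = val H T n k (TForm.map Sum.inl (.untl φ ψ)) := by
      intro d
      induction d with
      | zero =>
        intro k hk hd
        exact hlastcase k (by omega)
      | succ d ihd =>
        intro k hk hd
        by_cases hl : k + 1 = n
        · exact hlastcase k hl
        · have hk1 : k + 1 < n := by omega
          have h2 := val_of_tiff hHT hk1 (sat_twnext_talways hc1 (k + 1) (by omega) hk1)
          rw [val_prev_succ, val_disj, val_conj, val_prev_succ, val_prev_succ] at h2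
          rw [h2, ihd (k + 1) hk1 (by omega), ihφ hφ k hk, ihψ hψ k hk,
            show TForm.map Sum.inl (TForm.untl φ ψ)
              = TForm.untl (TForm.map Sum.inl φ) (TForm.map Sum.inl ψ) from rfl,
            val_untl_succ H T n k hk1]
    intro k hk
    exact main (n - 1 - k) k hk le_rfl
  | rels φ ψ ihφ ihψ =>
    intro hμ
    have hφ : φ ∈ subfTh Γ := subfTh_closed hμ (by
      simp only [subf, Set.mem_insert_iff, Set.mem_union]
      exact Or.inr (Or.inl (mem_subf_self _)))
    have hψ : ψ ∈ subfTh Γ := subfTh_closed hμ (by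
      simp only [subf, Set.mem_insert_iff, Set.mem_union]
      exact Or.inr (Or.inr (mem_subf_self _)))
    have hc1 : sat n H T 0 (twnext (talways (tiff (.prev (lab (.rels φ ψ)))
        (.conj (.prev (lab ψ)) (.disj (.prev (lab φ)) (lab (.rels φ ψ))))))) :=
      heta _ hμ _ (Set.mem_insert _ _)
    have hc2 : sat n H T 0 (talways (.impl (tneg (.next ttop))
        (tiff (lab (.rels φ ψ)) (lab ψ)))) :=
      heta _ hμ _ (Set.mem_insert_iff.mpr (Or.inr rfl))
    have hlastcase : ∀ k, k + 1 = n →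
        val H T n k (lab (.rels φ ψ)) = val H T n k (TForm.map Sum.inl (.rels φ ψ)) := by
      intro k hk1
      have hk : k < n := by omega
      have hB := sat_lastimpl hk1 (sat_talways_iff.mp hc2 k (by omega) hk)
      rw [val_of_tiff hHT hk hB, ihψ hψ k hk,
        show TForm.map Sum.inl (TForm.rels φ ψ)
          = TForm.rels (TForm.map Sum.inl φ) (TForm.map Sum.inl ψ) from rfl,
        val_rels_last H T n k hk1]
    have main : ∀ d k, k < n → n - 1 - k ≤ d →
        val H T n k (lab (.rels φ ψ)) = val H T n k (TForm.map Sum.inl (.rels φ ψ)) := by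
      intro d
      induction d with
      | zero =>
        intro k hk hd
        exact hlastcase k (by omega)
      | succ d ihd =>
        intro k hk hd
        by_cases hl : k + 1 = n
        · exact hlastcase k hl
        · have hk1 : k + 1 < n := by omega
          have h2 := val_of_tiff hHT hk1 (sat_twnext_talways hc1 (k + 1) (by omega) hk1)
          rw [val_prev_succ, val_conj, val_disj, val_prev_succ, val_prev_succ] at h2
          rw [h2, ihd (k + 1) hk1 (by omega), ihφ hφ k hk, ihψ hψ k hk,
            show TForm.map Sum.inl (TForm.rels φ ψ)
              = TForm.rels (TForm.map Sum.inl φ) (TForm.map Sum.inl ψ) from rfl,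
            val_rels_succ H T n k hk1]
    intro k hk
    exact main (n - 1 - k) k hk le_rfl
end

section
/- For any temporal theory Γ over alphabet 𝒜 and any length λ, the set of THT_f models of Γ of length λ equals the set of restrictions to 𝒜 of THT_f models of σ(Γ) of length λ; i.e., { ⟨H,T⟩ | ⟨H,T⟩ ⊨ Γ } = { ⟨H',T'⟩|_𝒜 | ⟨H',T'⟩ ⊨ σ(Γ) }. -/
/-- Extend a trace of length `n` (indexed by `Fin n`) to all of `ℕ` (by `∅`). -/
def pad {β : Type} (n : ℕ) (f : Fin n → Set β) : ℕ → Set β :=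
  fun k => if h : k < n then f ⟨k, h⟩ else ∅
section Lemmas
variable {α : Type} {n : ℕ}

lemma persistence {H T : ℕ → Set α} (hsub : ∀ k, H k ⊆ T k) :
    ∀ (φ : TForm α) (k), sat n H T k φ → sat n T T k φ := by
  intro φ
  induction φ with
  | bot => intro k h; exact h
  | atom a => intro k h; exact hsub k h
  | conj φ ψ ihφ ihψ => intro k h; exact ⟨ihφ k h.1, ihψ k h.2⟩
  | disj φ ψ ihφ ihψ => intro k h; exact h.imp (ihφ k) (ihψ k)
  | impl φ ψ ihφ ihψ => intro k h; exact ⟨h.2, h.2⟩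
  | prev φ ih => intro k h; exact ⟨h.1, ih _ h.2⟩
  | since φ ψ ihφ ihψ =>
      intro k h
      obtain ⟨j, hj, hψ, hφ⟩ := h
      exact ⟨j, hj, ihψ j hψ, fun i h1 h2 => ihφ i (hφ i h1 h2)⟩
  | trig φ ψ ihφ ihψ =>
      intro k h j hj
      rcases h j hj with h | ⟨i, h1, h2, h3⟩
      · exact Or.inl (ihψ j h)
      · exact Or.inr ⟨i, h1, h2, ihφ i h3⟩
  | next φ ih => intro k h; exact ⟨h.1, ih _ h.2⟩
  | untl φ ψ ihφ ihψ =>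
      intro k h
      obtain ⟨j, hj1, hj2, hψ, hφ⟩ := h
      exact ⟨j, hj1, hj2, ihψ j hψ, fun i h1 h2 => ihφ i (hφ i h1 h2)⟩
  | rels φ ψ ihφ ihψ =>
      intro k h j hj1 hj2
      rcases h j hj1 hj2 with h | ⟨i, h1, h2, h3⟩
      · exact Or.inl (ihψ j h)
      · exact Or.inr ⟨i, h1, h2, ihφ i h3⟩

lemma sat_ttop {H T : ℕ → Set α} {k : ℕ} : sat n H T k (ttop (β := α)) := by
  exact ⟨fun h => h, fun h => h⟩

lemma sat_tneg {H T : ℕ → Set α} {k : ℕ} {φ : TForm α} :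
    sat n H T k (tneg φ) ↔ ¬ sat n H T k φ ∧ ¬ sat n T T k φ := by
  simp [tneg, sat]

lemma sat_tiff {H T : ℕ → Set α} {k : ℕ} {φ ψ : TForm α} :
    sat n H T k (tiff φ ψ) ↔
      (sat n H T k φ ↔ sat n H T k ψ) ∧ (sat n T T k φ ↔ sat n T T k ψ) := by
  simp only [tiff, sat]; tauto

lemma sat_talways {H T : ℕ → Set α} {k : ℕ} {φ : TForm α} :
    sat n H T k (talways φ) ↔ ∀ j, k ≤ j → j < n → sat n H T j φ := by
  simp only [talways, sat]
  constructor
  · intro h j h1 h2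
    rcases h j h1 h2 with h | ⟨i, _, _, h3⟩
    · exact h
    · simp [sat] at h3
  · intro h j h1 h2; exact Or.inl (h j h1 h2)

lemma sat_twnext {H T : ℕ → Set α} {k : ℕ} {φ : TForm α} :
    sat n H T k (twnext φ) ↔ (k + 1 < n → sat n H T (k + 1) φ) := by
  simp only [twnext, sat, sat_tneg (n := n)]
  constructor
  · rintro (⟨h1, h2⟩ | ⟨h1, h2⟩) h
    · exact absurd ⟨h, fun x => x, fun x => x⟩ h1
    · exact h2
  · intro h
    by_cases hk : k + 1 < n
    · exact Or.inr ⟨hk, h hk⟩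
    · refine Or.inl ⟨fun hc => hk hc.1, fun hc => hk hc.1⟩

end Lemmas
section Rec
variable {α : Type} {n : ℕ} {H T : ℕ → Set α} {φ ψ : TForm α}

lemma sat_since_zero : sat n H T 0 (.since φ ψ) ↔ sat n H T 0 ψ := by
  constructor
  · rintro ⟨j, hj, h, _⟩; interval_cases j; exact h
  · intro h; exact ⟨0, le_refl _, h, fun i h1 h2 => absurd h1 (by omega)⟩

lemma sat_since_succ {k : ℕ} :
    sat n H T (k + 1) (.since φ ψ) ↔
      sat n H T (k + 1) ψ ∨ (sat n H T (k + 1) φ ∧ sat n H T k (.since φ ψ)) := by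
  constructor
  · rintro ⟨j, hj, hψ, hφ⟩
    by_cases hjk : j = k + 1
    · subst hjk; exact Or.inl hψ
    · exact Or.inr ⟨hφ (k + 1) (by omega) (le_refl _),
        j, by omega, hψ, fun i h1 h2 => hφ i h1 (by omega)⟩
  · rintro (h | ⟨hφ, j, hj, hψ, hrest⟩)
    · exact ⟨k + 1, le_refl _, h, fun i h1 h2 => absurd h1 (by omega)⟩
    · refine ⟨j, by omega, hψ, fun i h1 h2 => ?_⟩
      by_cases hik : i = k + 1
      · subst hik; exact hφ
      · exact hrest i h1 (by omega)

lemma sat_trig_zero : sat n H T 0 (.trig φ ψ) ↔ sat n H T 0 ψ := by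
  constructor
  · intro h
    rcases h 0 (le_refl _) with h | ⟨i, h1, h2, _⟩
    · exact h
    · omega
  · intro h j hj
    interval_cases j; exact Or.inl h

lemma sat_trig_succ {k : ℕ} :
    sat n H T (k + 1) (.trig φ ψ) ↔
      sat n H T (k + 1) ψ ∧ (sat n H T (k + 1) φ ∨ sat n H T k (.trig φ ψ)) := by
  constructor
  · intro h
    have hψ : sat n H T (k + 1) ψ := by
      rcases h (k + 1) (le_refl _) with h | ⟨i, h1, h2, _⟩
      · exact h
      · omega
    refine ⟨hψ, ?_⟩
    by_cases hφ : sat n H T (k + 1) φ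
    · exact Or.inl hφ
    · refine Or.inr fun j hj => ?_
      rcases h j (by omega) with h | ⟨i, h1, h2, h3⟩
      · exact Or.inl h
      · by_cases hik : i = k + 1
        · subst hik; exact absurd h3 hφ
        · exact Or.inr ⟨i, h1, by omega, h3⟩
  · rintro ⟨hψ, hd⟩ j hj
    by_cases hjk : j = k + 1
    · subst hjk; exact Or.inl hψ
    · rcases hd with hφ | htr
      · exact Or.inr ⟨k + 1, by omega, le_refl _, hφ⟩
      · rcases htr j (by omega) with h | ⟨i, h1, h2, h3⟩
        · exact Or.inl h
        · exact Or.inr ⟨i, h1, by omega, h3⟩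

lemma sat_untl_succ {k : ℕ} (hk : k + 1 < n) :
    sat n H T k (.untl φ ψ) ↔
      sat n H T k ψ ∨ (sat n H T k φ ∧ sat n H T (k + 1) (.untl φ ψ)) := by
  constructor
  · rintro ⟨j, hj1, hj2, hψ, hφ⟩
    by_cases hjk : j = k
    · subst hjk; exact Or.inl hψ
    · exact Or.inr ⟨hφ k (le_refl _) (by omega),
        j, by omega, hj2, hψ, fun i h1 h2 => hφ i (by omega) h2⟩
  · rintro (h | ⟨hφ, j, hj1, hj2, hψ, hrest⟩)
    · exact ⟨k, le_refl _, by omega, h, fun i h1 h2 => absurd h2 (by omega)⟩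
    · refine ⟨j, by omega, hj2, hψ, fun i h1 h2 => ?_⟩
      by_cases hik : i = k
      · subst hik; exact hφ
      · exact hrest i (by omega) h2

lemma sat_untl_last {k : ℕ} (hk : k < n) (hl : ¬ k + 1 < n) :
    sat n H T k (.untl φ ψ) ↔ sat n H T k ψ := by
  constructor
  · rintro ⟨j, hj1, hj2, hψ, _⟩
    have : j = k := by omega
    subst this; exact hψ
  · intro h; exact ⟨k, le_refl _, hk, h, fun i h1 h2 => absurd h2 (by omega)⟩

lemma sat_rels_succ {k : ℕ} (hk : k + 1 < n) :
    sat n H T k (.rels φ ψ) ↔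
      sat n H T k ψ ∧ (sat n H T k φ ∨ sat n H T (k + 1) (.rels φ ψ)) := by
  constructor
  · intro h
    have hψ : sat n H T k ψ := by
      rcases h k (le_refl _) (by omega) with h | ⟨i, h1, h2, _⟩
      · exact h
      · omega
    refine ⟨hψ, ?_⟩
    by_cases hφ : sat n H T k φ
    · exact Or.inl hφ
    · refine Or.inr fun j hj1 hj2 => ?_
      rcases h j (by omega) hj2 with h | ⟨i, h1, h2, h3⟩
      · exact Or.inl h
      · by_cases hik : i = k
        · subst hik; exact absurd h3 hφ
        · exact Or.inr ⟨i, by omega, h2, h3⟩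
  · rintro ⟨hψ, hd⟩ j hj1 hj2
    by_cases hjk : j = k
    · subst hjk; exact Or.inl hψ
    · rcases hd with hφ | hr
      · exact Or.inr ⟨k, le_refl _, by omega, hφ⟩
      · rcases hr j (by omega) hj2 with h | ⟨i, h1, h2, h3⟩
        · exact Or.inl h
        · exact Or.inr ⟨i, by omega, h2, h3⟩

lemma sat_rels_last {k : ℕ} (hk : k < n) (hl : ¬ k + 1 < n) :
    sat n H T k (.rels φ ψ) ↔ sat n H T k ψ := by
  constructor
  · intro h
    rcases h k (le_refl _) hk with h | ⟨i, h1, h2, _⟩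
    · exact h
    · omega
  · intro h j hj1 hj2
    have : j = k := by omega
    subst this; exact Or.inl h

end Rec
section Unfold
variable {α : Type} {n : ℕ} {H T : ℕ → Set α} {φ ψ : TForm α} {k : ℕ}

lemma sat_disj : sat n H T k (.disj φ ψ) ↔ sat n H T k φ ∨ sat n H T k ψ := Iff.rfl
lemma sat_conj : sat n H T k (.conj φ ψ) ↔ sat n H T k φ ∧ sat n H T k ψ := Iff.rfl
lemma sat_impl : sat n H T k (.impl φ ψ) ↔
    (sat n H T k φ → sat n H T k ψ) ∧ (sat n T T k φ → sat n T T k ψ) := Iff.rfl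
lemma sat_next : sat n H T k (.next φ) ↔ k + 1 < n ∧ sat n H T (k + 1) φ := Iff.rfl
lemma sat_prev_succ : sat n H T (k + 1) (.prev φ) ↔ sat n H T k φ := by
  simp [sat]
lemma sat_prev_zero : ¬ sat n H T 0 (.prev φ) := by
  simp [sat]

lemma subf_self (μ : TForm α) : μ ∈ subf μ := by
  cases μ <;> simp [subf]

end Unfold

section Label
variable {α : Type} {n : ℕ}

/-- The per-time-point correctness property of the label of `μ`. -/
def OkAt (n : ℕ) (H' T' : ℕ → Set (ExtAlph α)) (μ : TForm α) (k : ℕ) : Prop :=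
  (sat n H' T' k (lab μ) ↔ sat n (restrict H') (restrict T') k μ) ∧
  (sat n T' T' k (lab μ) ↔ sat n (restrict T') (restrict T') k μ)

end Label
section LabelOk
variable {α : Type} {n : ℕ}

lemma labelOk {H' T' : ℕ → Set (ExtAlph α)} :
    ∀ μ : TForm α, (∀ ν ∈ subf μ, ∀ δ ∈ eta ν, sat n H' T' 0 δ) →
      ∀ k, k < n → OkAt n H' T' μ k := by
  intro μ
  induction μ with
  | bot => intro _ k _; constructor <;> simp [lab, sat]
  | atom a => intro _ k _; constructor <;> simp [lab, sat, restrict]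
  | conj φ ψ ihφ ihψ =>
      intro hη
      have eφ := ihφ (fun ν hν => hη ν (Set.mem_insert_of_mem _ (Set.mem_union_left _ hν)))
      have eψ := ihψ (fun ν hν => hη ν (Set.mem_insert_of_mem _ (Set.mem_union_right _ hν)))
      have h1 := hη _ (subf_self _) _ rfl
      rw [sat_talways] at h1
      intro k hk
      have hiff := h1 k (Nat.zero_le _) hk
      rw [sat_tiff] at hiff
      refine ⟨hiff.1.trans ?_, hiff.2.trans ?_⟩
      · rw [sat_conj, (eφ k hk).1, (eψ k hk).1, sat_conj]
      · rw [sat_conj, (eφ k hk).2, (eψ k hk).2, sat_conj]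
  | disj φ ψ ihφ ihψ =>
      intro hη
      have eφ := ihφ (fun ν hν => hη ν (Set.mem_insert_of_mem _ (Set.mem_union_left _ hν)))
      have eψ := ihψ (fun ν hν => hη ν (Set.mem_insert_of_mem _ (Set.mem_union_right _ hν)))
      have h1 := hη _ (subf_self _) _ rfl
      rw [sat_talways] at h1
      intro k hk
      have hiff := h1 k (Nat.zero_le _) hk
      rw [sat_tiff] at hiff
      refine ⟨hiff.1.trans ?_, hiff.2.trans ?_⟩
      · rw [sat_disj, (eφ k hk).1, (eψ k hk).1, sat_disj]
      · rw [sat_disj, (eφ k hk).2, (eψ k hk).2, sat_disj]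
  | impl φ ψ ihφ ihψ =>
      intro hη
      have eφ := ihφ (fun ν hν => hη ν (Set.mem_insert_of_mem _ (Set.mem_union_left _ hν)))
      have eψ := ihψ (fun ν hν => hη ν (Set.mem_insert_of_mem _ (Set.mem_union_right _ hν)))
      have h1 := hη _ (subf_self _) _ rfl
      rw [sat_talways] at h1
      intro k hk
      have hiff := h1 k (Nat.zero_le _) hk
      rw [sat_tiff] at hiff
      refine ⟨hiff.1.trans ?_, hiff.2.trans ?_⟩
      · rw [sat_impl, (eφ k hk).1, (eψ k hk).1, (eφ k hk).2, (eψ k hk).2, sat_impl]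
      · rw [sat_impl, (eφ k hk).2, (eψ k hk).2, sat_impl]
  | prev φ ih =>
      intro hη
      have eφ := ih (fun ν hν => hη ν (Set.mem_insert_of_mem _ hν))
      have h1 := hη _ (subf_self _) _ (Set.mem_insert _ _)
      have h2 := hη _ (subf_self _) _ (Set.mem_insert_of_mem _ rfl)
      rw [sat_twnext] at h1
      rw [sat_tneg] at h2
      intro k hk
      rcases k with _ | j
      · exact ⟨⟨fun h => absurd h h2.1, fun h => absurd h sat_prev_zero⟩,
          ⟨fun h => absurd h h2.2, fun h => absurd h sat_prev_zero⟩⟩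
      · have ht := h1 (by omega)
        rw [sat_talways] at ht
        have hiff := ht (j + 1) (by omega) hk
        rw [sat_tiff] at hiff
        constructor
        · rw [hiff.1, sat_prev_succ, (eφ j (by omega)).1, sat_prev_succ]
        · rw [hiff.2, sat_prev_succ, (eφ j (by omega)).2, sat_prev_succ]
  | since φ ψ ihφ ihψ =>
      intro hη
      have eφ := ihφ (fun ν hν => hη ν (Set.mem_insert_of_mem _ (Set.mem_union_left _ hν)))
      have eψ := ihψ (fun ν hν => hη ν (Set.mem_insert_of_mem _ (Set.mem_union_right _ hν)))
      have h1 := hη _ (subf_self _) _ (Set.mem_insert _ _)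
      have h2 := hη _ (subf_self _) _ (Set.mem_insert_of_mem _ rfl)
      rw [sat_twnext] at h1
      rw [sat_tiff] at h2
      intro k
      induction k with
      | zero =>
          intro hk
          refine ⟨h2.1.trans ?_, h2.2.trans ?_⟩
          · rw [(eψ 0 hk).1, sat_since_zero]
          · rw [(eψ 0 hk).2, sat_since_zero]
      | succ j ihj =>
          intro hk
          have hj := ihj (by omega)
          have ht := h1 (by omega)
          rw [sat_talways] at ht
          have hiff := ht (j + 1) (by omega) hk
          rw [sat_tiff] at hiff
          refine ⟨hiff.1.trans ?_, hiff.2.trans ?_⟩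
          · rw [sat_disj, sat_conj, sat_prev_succ, (eψ _ hk).1, (eφ _ hk).1, hj.1,
              sat_since_succ]
          · rw [sat_disj, sat_conj, sat_prev_succ, (eψ _ hk).2, (eφ _ hk).2, hj.2,
              sat_since_succ]
  | trig φ ψ ihφ ihψ =>
      intro hη
      have eφ := ihφ (fun ν hν => hη ν (Set.mem_insert_of_mem _ (Set.mem_union_left _ hν)))
      have eψ := ihψ (fun ν hν => hη ν (Set.mem_insert_of_mem _ (Set.mem_union_right _ hν)))
      have h1 := hη _ (subf_self _) _ (Set.mem_insert _ _)
      have h2 := hη _ (subf_self _) _ (Set.mem_insert_of_mem _ rfl)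
      rw [sat_twnext] at h1
      rw [sat_tiff] at h2
      intro k
      induction k with
      | zero =>
          intro hk
          refine ⟨h2.1.trans ?_, h2.2.trans ?_⟩
          · rw [(eψ 0 hk).1, sat_trig_zero]
          · rw [(eψ 0 hk).2, sat_trig_zero]
      | succ j ihj =>
          intro hk
          have hj := ihj (by omega)
          have ht := h1 (by omega)
          rw [sat_talways] at ht
          have hiff := ht (j + 1) (by omega) hk
          rw [sat_tiff] at hiff
          refine ⟨hiff.1.trans ?_, hiff.2.trans ?_⟩
          · rw [sat_conj, sat_disj, sat_prev_succ, (eψ _ hk).1, (eφ _ hk).1, hj.1,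
              sat_trig_succ]
          · rw [sat_conj, sat_disj, sat_prev_succ, (eψ _ hk).2, (eφ _ hk).2, hj.2,
              sat_trig_succ]
  | next φ ih =>
      intro hη
      have eφ := ih (fun ν hν => hη ν (Set.mem_insert_of_mem _ hν))
      have h1 := hη _ (subf_self _) _ (Set.mem_insert _ _)
      have h2 := hη _ (subf_self _) _ (Set.mem_insert_of_mem _ rfl)
      rw [sat_twnext] at h1
      rw [sat_talways] at h2
      intro k hk
      by_cases hl : k + 1 < n
      · have ht := h1 (by omega)
        rw [sat_talways] at ht
        have hiff := ht (k + 1) (by omega) hl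
        rw [sat_tiff] at hiff
        have g1 : sat n H' T' k (lab (.next φ)) ↔ sat n H' T' (k + 1) (lab φ) :=
          sat_prev_succ.symm.trans hiff.1
        have g2 : sat n T' T' k (lab (.next φ)) ↔ sat n T' T' (k + 1) (lab φ) :=
          sat_prev_succ.symm.trans hiff.2
        constructor
        · rw [g1, (eφ _ hl).1, sat_next]
          exact ⟨fun h => ⟨hl, h⟩, fun h => h.2⟩
        · rw [g2, (eφ _ hl).2, sat_next]
          exact ⟨fun h => ⟨hl, h⟩, fun h => h.2⟩
      · have himp := h2 k (Nat.zero_le _) hk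
        rw [sat_impl] at himp
        have hwn1 : sat n H' T' k (tneg (.next ttop)) := by
          rw [sat_tneg]
          exact ⟨fun hc => hl (sat_next.mp hc).1, fun hc => hl (sat_next.mp hc).1⟩
        have hH := himp.1 hwn1
        rw [sat_tneg] at hH
        exact ⟨⟨fun h => absurd h hH.1, fun h => absurd (sat_next.mp h).1 hl⟩,
          ⟨fun h => absurd h hH.2, fun h => absurd (sat_next.mp h).1 hl⟩⟩
  | untl φ ψ ihφ ihψ =>
      intro hη
      have eφ := ihφ (fun ν hν => hη ν (Set.mem_insert_of_mem _ (Set.mem_union_left _ hν)))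
      have eψ := ihψ (fun ν hν => hη ν (Set.mem_insert_of_mem _ (Set.mem_union_right _ hν)))
      have h1 := hη _ (subf_self _) _ (Set.mem_insert _ _)
      have h2 := hη _ (subf_self _) _ (Set.mem_insert_of_mem _ rfl)
      rw [sat_twnext] at h1
      rw [sat_talways] at h2
      suffices key : ∀ m k, k < n → n - k ≤ m → OkAt n H' T' (.untl φ ψ) k by
        intro k hk; exact key (n - k) k hk le_rfl
      intro m
      induction m with
      | zero => intro k hk hm; omega
      | succ m ihm =>
          intro k hk hm
          by_cases hl : k + 1 < n
          · have hnext := ihm (k + 1) hl (by omega)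
            have ht := h1 (by omega)
            rw [sat_talways] at ht
            have hiff := ht (k + 1) (by omega) hl
            rw [sat_tiff] at hiff
            have g1 : sat n H' T' k (lab (.untl φ ψ)) ↔
                sat n H' T' (k + 1) (.disj (.prev (lab ψ))
                  (.conj (.prev (lab φ)) (lab (.untl φ ψ)))) :=
              sat_prev_succ.symm.trans hiff.1
            have g2 : sat n T' T' k (lab (.untl φ ψ)) ↔
                sat n T' T' (k + 1) (.disj (.prev (lab ψ))
                  (.conj (.prev (lab φ)) (lab (.untl φ ψ)))) :=
              sat_prev_succ.symm.trans hiff.2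
            constructor
            · rw [g1, sat_disj, sat_conj, sat_prev_succ, sat_prev_succ,
                (eψ _ hk).1, (eφ _ hk).1, hnext.1, sat_untl_succ hl]
            · rw [g2, sat_disj, sat_conj, sat_prev_succ, sat_prev_succ,
                (eψ _ hk).2, (eφ _ hk).2, hnext.2, sat_untl_succ hl]
          · have himp := h2 k (Nat.zero_le _) hk
            rw [sat_impl] at himp
            have hwn1 : sat n H' T' k (tneg (.next ttop)) := by
              rw [sat_tneg]
              exact ⟨fun hc => hl (sat_next.mp hc).1, fun hc => hl (sat_next.mp hc).1⟩
            have hwn2 : sat n T' T' k (tneg (.next ttop)) := by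
              rw [sat_tneg]
              exact ⟨fun hc => hl (sat_next.mp hc).1, fun hc => hl (sat_next.mp hc).1⟩
            have hH := himp.1 hwn1
            have hT := himp.2 hwn2
            rw [sat_tiff] at hH hT
            constructor
            · rw [sat_untl_last hk hl, ← (eψ _ hk).1]; exact hH.1
            · rw [sat_untl_last hk hl, ← (eψ _ hk).2]; exact hT.1
  | rels φ ψ ihφ ihψ =>
      intro hη
      have eφ := ihφ (fun ν hν => hη ν (Set.mem_insert_of_mem _ (Set.mem_union_left _ hν)))
      have eψ := ihψ (fun ν hν => hη ν (Set.mem_insert_of_mem _ (Set.mem_union_right _ hν)))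
      have h1 := hη _ (subf_self _) _ (Set.mem_insert _ _)
      have h2 := hη _ (subf_self _) _ (Set.mem_insert_of_mem _ rfl)
      rw [sat_twnext] at h1
      rw [sat_talways] at h2
      suffices key : ∀ m k, k < n → n - k ≤ m → OkAt n H' T' (.rels φ ψ) k by
        intro k hk; exact key (n - k) k hk le_rfl
      intro m
      induction m with
      | zero => intro k hk hm; omega
      | succ m ihm =>
          intro k hk hm
          by_cases hl : k + 1 < n
          · have hnext := ihm (k + 1) hl (by omega)
            have ht := h1 (by omega)
            rw [sat_talways] at ht
            have hiff := ht (k + 1) (by omega) hl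
            rw [sat_tiff] at hiff
            have g1 : sat n H' T' k (lab (.rels φ ψ)) ↔
                sat n H' T' (k + 1) (.conj (.prev (lab ψ))
                  (.disj (.prev (lab φ)) (lab (.rels φ ψ)))) :=
              sat_prev_succ.symm.trans hiff.1
            have g2 : sat n T' T' k (lab (.rels φ ψ)) ↔
                sat n T' T' (k + 1) (.conj (.prev (lab ψ))
                  (.disj (.prev (lab φ)) (lab (.rels φ ψ)))) :=
              sat_prev_succ.symm.trans hiff.2
            constructor
            · rw [g1, sat_conj, sat_disj, sat_prev_succ, sat_prev_succ,
                (eψ _ hk).1, (eφ _ hk).1, hnext.1, sat_rels_succ hl]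
            · rw [g2, sat_conj, sat_disj, sat_prev_succ, sat_prev_succ,
                (eψ _ hk).2, (eφ _ hk).2, hnext.2, sat_rels_succ hl]
          · have himp := h2 k (Nat.zero_le _) hk
            rw [sat_impl] at himp
            have hwn1 : sat n H' T' k (tneg (.next ttop)) := by
              rw [sat_tneg]
              exact ⟨fun hc => hl (sat_next.mp hc).1, fun hc => hl (sat_next.mp hc).1⟩
            have hwn2 : sat n T' T' k (tneg (.next ttop)) := by
              rw [sat_tneg]
              exact ⟨fun hc => hl (sat_next.mp hc).1, fun hc => hl (sat_next.mp hc).1⟩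
            have hH := himp.1 hwn1
            have hT := himp.2 hwn2
            rw [sat_tiff] at hH hT
            constructor
            · rw [sat_rels_last hk hl, ← (eψ _ hk).1]; exact hH.1
            · rw [sat_rels_last hk hl, ← (eψ _ hk).2]; exact hT.1

end LabelOk
section Forward
variable {α : Type} {n : ℕ}

/-- The extended trace: original atoms plus labels evaluated by `sat`. -/
def extTr (n : ℕ) (H T : ℕ → Set α) : ℕ → Set (ExtAlph α) :=
  fun k => if k < n then
    {x | Sum.elim (fun a => a ∈ H k) (fun μ => sat n H T k μ) x} else ∅

lemma mem_extTr_inl {H T : ℕ → Set α} {k : ℕ} {a : α} (hk : k < n) :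
    Sum.inl a ∈ extTr n H T k ↔ a ∈ H k := by
  simp [extTr, hk]

lemma mem_extTr_inr {H T : ℕ → Set α} {k : ℕ} {μ : TForm α} (hk : k < n) :
    Sum.inr μ ∈ extTr n H T k ↔ sat n H T k μ := by
  simp [extTr, hk]

lemma sat_lab_ext {H T : ℕ → Set α} (W : ℕ → Set (ExtAlph α)) {μ : TForm α} {k : ℕ}
    (hk : k < n) : sat n (extTr n H T) W k (lab μ) ↔ sat n H T k μ := by
  cases μ <;> simp [lab, sat, extTr, hk]

lemma extTr_subset {H T : ℕ → Set α} (hsub : ∀ k, H k ⊆ T k) (k : ℕ) :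
    extTr n H T k ⊆ extTr n T T k := by
  intro x hx
  by_cases hk : k < n
  · rcases x with a | μ
    · rw [mem_extTr_inl hk] at hx ⊢; exact hsub k hx
    · rw [mem_extTr_inr hk] at hx ⊢; exact persistence hsub μ k hx
  · simp [extTr, hk] at hx

lemma eta_sat {H T : ℕ → Set α} (hn : 0 < n) (μ : TForm α) :
    ∀ δ ∈ eta μ, sat n (extTr n H T) (extTr n T T) 0 δ := by
  intro δ hδ
  cases μ with
  | bot => simp [eta] at hδ
  | atom a => simp [eta] at hδ
  | conj φ ψ =>
      simp only [eta, Set.mem_singleton_iff] at hδ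
      subst hδ
      rw [sat_talways]
      intro j _ hj
      rw [sat_tiff]
      constructor
      · rw [sat_lab_ext _ hj, sat_conj, sat_conj, sat_lab_ext _ hj, sat_lab_ext _ hj]
      · rw [sat_lab_ext _ hj, sat_conj, sat_conj, sat_lab_ext _ hj, sat_lab_ext _ hj]
  | disj φ ψ =>
      simp only [eta, Set.mem_singleton_iff] at hδ
      subst hδ
      rw [sat_talways]
      intro j _ hj
      rw [sat_tiff]
      constructor
      · rw [sat_lab_ext _ hj, sat_disj, sat_disj, sat_lab_ext _ hj, sat_lab_ext _ hj]
      · rw [sat_lab_ext _ hj, sat_disj, sat_disj, sat_lab_ext _ hj, sat_lab_ext _ hj]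
  | impl φ ψ =>
      simp only [eta, Set.mem_singleton_iff] at hδ
      subst hδ
      rw [sat_talways]
      intro j _ hj
      rw [sat_tiff]
      constructor
      · rw [sat_lab_ext _ hj, sat_impl, sat_impl, sat_lab_ext _ hj, sat_lab_ext _ hj,
          sat_lab_ext _ hj, sat_lab_ext _ hj]
      · rw [sat_lab_ext _ hj, sat_impl, sat_impl, sat_lab_ext _ hj, sat_lab_ext _ hj]
  | prev φ =>
      simp only [eta, Set.mem_insert_iff, Set.mem_singleton_iff] at hδ
      rcases hδ with rfl | rfl
      · rw [sat_twnext]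
        intro _
        rw [sat_talways]
        intro j hj1 hjn
        rcases j with _ | j
        · omega
        · rw [sat_tiff]
          constructor
          · rw [sat_lab_ext _ hjn, sat_prev_succ, sat_prev_succ,
              sat_lab_ext _ (show j < n by omega)]
          · rw [sat_lab_ext _ hjn, sat_prev_succ, sat_prev_succ,
              sat_lab_ext _ (show j < n by omega)]
      · rw [sat_tneg]
        constructor
        · rw [sat_lab_ext _ hn]; exact sat_prev_zero
        · rw [sat_lab_ext _ hn]; exact sat_prev_zero
  | since φ ψ =>
      simp only [eta, Set.mem_insert_iff, Set.mem_singleton_iff] at hδ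
      rcases hδ with rfl | rfl
      · rw [sat_twnext]
        intro _
        rw [sat_talways]
        intro j hj1 hjn
        rcases j with _ | j
        · omega
        · have hjn' : j < n := by omega
          rw [sat_tiff]
          constructor
          · rw [sat_lab_ext _ hjn, sat_disj, sat_conj, sat_prev_succ,
              sat_lab_ext _ hjn, sat_lab_ext _ hjn, sat_lab_ext _ hjn',
              sat_since_succ]
          · rw [sat_lab_ext _ hjn, sat_disj, sat_conj, sat_prev_succ,
              sat_lab_ext _ hjn, sat_lab_ext _ hjn, sat_lab_ext _ hjn',
              sat_since_succ]
      · rw [sat_tiff]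
        constructor
        · rw [sat_lab_ext _ hn, sat_lab_ext _ hn, sat_since_zero]
        · rw [sat_lab_ext _ hn, sat_lab_ext _ hn, sat_since_zero]
  | trig φ ψ =>
      simp only [eta, Set.mem_insert_iff, Set.mem_singleton_iff] at hδ
      rcases hδ with rfl | rfl
      · rw [sat_twnext]
        intro _
        rw [sat_talways]
        intro j hj1 hjn
        rcases j with _ | j
        · omega
        · have hjn' : j < n := by omega
          rw [sat_tiff]
          constructor
          · rw [sat_lab_ext _ hjn, sat_conj, sat_disj, sat_prev_succ,
              sat_lab_ext _ hjn, sat_lab_ext _ hjn, sat_lab_ext _ hjn',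
              sat_trig_succ]
          · rw [sat_lab_ext _ hjn, sat_conj, sat_disj, sat_prev_succ,
              sat_lab_ext _ hjn, sat_lab_ext _ hjn, sat_lab_ext _ hjn',
              sat_trig_succ]
      · rw [sat_tiff]
        constructor
        · rw [sat_lab_ext _ hn, sat_lab_ext _ hn, sat_trig_zero]
        · rw [sat_lab_ext _ hn, sat_lab_ext _ hn, sat_trig_zero]
  | next φ =>
      simp only [eta, Set.mem_insert_iff, Set.mem_singleton_iff] at hδ
      rcases hδ with rfl | rfl
      · rw [sat_twnext]
        intro _
        rw [sat_talways]
        intro j hj1 hjn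
        rcases j with _ | j
        · omega
        · have hjn' : j < n := by omega
          rw [sat_tiff]
          constructor
          · rw [sat_prev_succ, sat_lab_ext _ hjn', sat_lab_ext _ hjn, sat_next]
            exact ⟨fun h => h.2, fun h => ⟨hjn, h⟩⟩
          · rw [sat_prev_succ, sat_lab_ext _ hjn', sat_lab_ext _ hjn, sat_next]
            exact ⟨fun h => h.2, fun h => ⟨hjn, h⟩⟩
      · rw [sat_talways]
        intro j _ hjn
        rw [sat_impl]
        constructor
        · intro hng
          rw [sat_tneg] at hng
          have hl : ¬ j + 1 < n := fun hc => hng.1 ⟨hc, sat_ttop⟩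
          rw [sat_tneg]
          constructor
          · rw [sat_lab_ext _ hjn]; exact fun hc => hl (sat_next.mp hc).1
          · rw [sat_lab_ext _ hjn]; exact fun hc => hl (sat_next.mp hc).1
        · intro hng
          rw [sat_tneg] at hng
          have hl : ¬ j + 1 < n := fun hc => hng.1 ⟨hc, sat_ttop⟩
          rw [sat_tneg]
          constructor
          · rw [sat_lab_ext _ hjn]; exact fun hc => hl (sat_next.mp hc).1
          · rw [sat_lab_ext _ hjn]; exact fun hc => hl (sat_next.mp hc).1
  | untl φ ψ =>
      simp only [eta, Set.mem_insert_iff, Set.mem_singleton_iff] at hδ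
      rcases hδ with rfl | rfl
      · rw [sat_twnext]
        intro _
        rw [sat_talways]
        intro j hj1 hjn
        rcases j with _ | j
        · omega
        · have hjn' : j < n := by omega
          rw [sat_tiff]
          constructor
          · rw [sat_prev_succ, sat_lab_ext _ hjn', sat_disj, sat_conj,
              sat_prev_succ, sat_prev_succ, sat_lab_ext _ hjn', sat_lab_ext _ hjn',
              sat_lab_ext _ hjn, sat_untl_succ hjn]
          · rw [sat_prev_succ, sat_lab_ext _ hjn', sat_disj, sat_conj,
              sat_prev_succ, sat_prev_succ, sat_lab_ext _ hjn', sat_lab_ext _ hjn',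
              sat_lab_ext _ hjn, sat_untl_succ hjn]
      · rw [sat_talways]
        intro j _ hjn
        rw [sat_impl]
        constructor
        · intro hng
          rw [sat_tneg] at hng
          have hl : ¬ j + 1 < n := fun hc => hng.1 ⟨hc, sat_ttop⟩
          rw [sat_tiff]
          constructor
          · rw [sat_lab_ext _ hjn, sat_lab_ext _ hjn, sat_untl_last hjn hl]
          · rw [sat_lab_ext _ hjn, sat_lab_ext _ hjn, sat_untl_last hjn hl]
        · intro hng
          rw [sat_tneg] at hng
          have hl : ¬ j + 1 < n := fun hc => hng.1 ⟨hc, sat_ttop⟩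
          rw [sat_tiff]
          constructor
          · rw [sat_lab_ext _ hjn, sat_lab_ext _ hjn, sat_untl_last hjn hl]
          · rw [sat_lab_ext _ hjn, sat_lab_ext _ hjn, sat_untl_last hjn hl]
  | rels φ ψ =>
      simp only [eta, Set.mem_insert_iff, Set.mem_singleton_iff] at hδ
      rcases hδ with rfl | rfl
      · rw [sat_twnext]
        intro _
        rw [sat_talways]
        intro j hj1 hjn
        rcases j with _ | j
        · omega
        · have hjn' : j < n := by omega
          rw [sat_tiff]
          constructor
          · rw [sat_prev_succ, sat_lab_ext _ hjn', sat_conj, sat_disj,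
              sat_prev_succ, sat_prev_succ, sat_lab_ext _ hjn', sat_lab_ext _ hjn',
              sat_lab_ext _ hjn, sat_rels_succ hjn]
          · rw [sat_prev_succ, sat_lab_ext _ hjn', sat_conj, sat_disj,
              sat_prev_succ, sat_prev_succ, sat_lab_ext _ hjn', sat_lab_ext _ hjn',
              sat_lab_ext _ hjn, sat_rels_succ hjn]
      · rw [sat_talways]
        intro j _ hjn
        rw [sat_impl]
        constructor
        · intro hng
          rw [sat_tneg] at hng
          have hl : ¬ j + 1 < n := fun hc => hng.1 ⟨hc, sat_ttop⟩
          rw [sat_tiff]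
          constructor
          · rw [sat_lab_ext _ hjn, sat_lab_ext _ hjn, sat_rels_last hjn hl]
          · rw [sat_lab_ext _ hjn, sat_lab_ext _ hjn, sat_rels_last hjn hl]
        · intro hng
          rw [sat_tneg] at hng
          have hl : ¬ j + 1 < n := fun hc => hng.1 ⟨hc, sat_ttop⟩
          rw [sat_tiff]
          constructor
          · rw [sat_lab_ext _ hjn, sat_lab_ext _ hjn, sat_rels_last hjn hl]
          · rw [sat_lab_ext _ hjn, sat_lab_ext _ hjn, sat_rels_last hjn hl]

end Forward

/-- Theorem thtmodels: For any temporal theory `Γ` over `α` and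
any length `n > 0`, the set of THT_f models of `Γ` of length `n` equals the set
of restrictions to `𝒜` of the THT_f models of `σ(Γ)` of length `n`. -/
theorem thtmodels {α : Type} (Γ : Set (TForm α)) (n : ℕ) (hlen : 0 < n) :
    {p : (Fin n → Set α) × (Fin n → Set α) |
        (∀ i, p.1 i ⊆ p.2 i) ∧ ∀ φ ∈ Γ, sat n (pad n p.1) (pad n p.2) 0 φ} =
    {p : (Fin n → Set α) × (Fin n → Set α) |
        ∃ q : (Fin n → Set (ExtAlph α)) × (Fin n → Set (ExtAlph α)),
          (∀ i, q.1 i ⊆ q.2 i) ∧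
          (∀ δ ∈ sigmaT Γ, sat n (pad n q.1) (pad n q.2) 0 δ) ∧
          p = (fun i => {a | Sum.inl a ∈ q.1 i}, fun i => {a | Sum.inl a ∈ q.2 i})} := by
  ext p
  simp only [Set.mem_setOf_eq]
  constructor
  · rintro ⟨hsub, hsat⟩
    have hsubp : ∀ k, pad n p.1 k ⊆ pad n p.2 k := by
      intro k x hx
      by_cases h : k < n
      · simp only [pad, dif_pos h] at hx ⊢; exact hsub _ hx
      · simp only [pad, dif_neg h] at hx; exact absurd hx (Set.notMem_empty x)
    refine ⟨(fun i => extTr n (pad n p.1) (pad n p.2) i.val,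
             fun i => extTr n (pad n p.2) (pad n p.2) i.val), ?_, ?_, ?_⟩
    · intro i; exact extTr_subset hsubp i.val
    · have e1 : pad n (fun i : Fin n => extTr n (pad n p.1) (pad n p.2) i.val) =
          extTr n (pad n p.1) (pad n p.2) := by
        funext k; by_cases h : k < n <;> simp [pad, extTr, h]
      have e2 : pad n (fun i : Fin n => extTr n (pad n p.2) (pad n p.2) i.val) =
          extTr n (pad n p.2) (pad n p.2) := by
        funext k; by_cases h : k < n <;> simp [pad, extTr, h]
      intro δ hδ
      rw [sigmaT, Set.mem_union] at hδ
      simp only [e1, e2]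
      rcases hδ with ⟨φ, hφ, rfl⟩ | hδ
      · rw [sat_lab_ext _ hlen]; exact hsat φ hφ
      · simp only [Set.mem_iUnion] at hδ
        obtain ⟨μ, _, hδ⟩ := hδ
        exact eta_sat hlen μ δ hδ
    · have h1 : p.1 = fun i : Fin n => {a | Sum.inl a ∈ extTr n (pad n p.1) (pad n p.2) i.val} := by
        funext i; ext a
        simp [mem_extTr_inl i.isLt, pad, i.isLt]
      have h2 : p.2 = fun i : Fin n => {a | Sum.inl a ∈ extTr n (pad n p.2) (pad n p.2) i.val} := by
        funext i; ext a
        simp [mem_extTr_inl i.isLt, pad, i.isLt]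
      exact Prod.ext h1 h2
  · rintro ⟨q, hqsub, hqsat, rfl⟩
    constructor
    · intro i a ha; exact hqsub i ha
    · intro φ hφ
      have e1 : pad n (fun i : Fin n => {a | Sum.inl a ∈ q.1 i}) = restrict (pad n q.1) := by
        funext k; ext a; by_cases h : k < n <;> simp [pad, restrict, h]
      have e2 : pad n (fun i : Fin n => {a | Sum.inl a ∈ q.2 i}) = restrict (pad n q.2) := by
        funext k; ext a; by_cases h : k < n <;> simp [pad, restrict, h]
      simp only [e1, e2]
      have hη : ∀ ν ∈ subf φ, ∀ δ ∈ eta ν, sat n (pad n q.1) (pad n q.2) 0 δ := by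
        intro ν hν δ hδ
        exact hqsat δ (Set.mem_union_right _
          (Set.mem_biUnion (Set.mem_biUnion hφ hν) hδ))
      exact (labelOk φ hη 0 hlen).1.mp (hqsat _ (Set.mem_union_left _ ⟨φ, hφ, rfl⟩))
end
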